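/- arXiv:2007.14068 — 5 statements merged into one kernel-verified Lean document; each statement's English description precedes it below -/
import Mathlib

section
/- For any nonnegative integer k and any point x_K in ℝ³, the space of vector-valued polynomials of degree at most k on ℝ³ decomposes as a direct sum: P_k(ℝ³;ℝ³) = ∇P_{k+1}(ℝ³) ⊕ ((x − x_K) × P_{k−1}(ℝ³;ℝ³)), where the second summand is the set of functions of the form x ↦ (x − x_K) × q(x) with q a vector polynomial of degree at most k−1. -/
/-!
After translating `x_K` to the origin, every polynomial field `h` satisfies
`∇(x · h) = h + (x · ∇) h + x × curl h`, and on homogeneous polynomials of degree `m` the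
Euler operator `x · ∇` is multiplication by `m`. Hence with `h := (1 + x · ∇)⁻¹ v`, again a
polynomial of degree `≤ k`, we get `v = ∇(x · h) + x × (-curl h)`. The sum is direct: dotting
`∇q + x × r = 0` with `x` gives `(x · ∇) q = 0`, which forces `q` to be constant.
-/

open MeasureTheory

noncomputable section

abbrev V3 := Fin 3 → ℝ

def pd (i : Fin 3) (f : V3 → ℝ) (x : V3) : ℝ := fderiv ℝ f x (Pi.single i 1)

def grad (f : V3 → ℝ) (x : V3) : V3 := fun i => pd i f x

def curl (v : V3 → V3) (x : V3) : V3 :=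
  ![pd 1 (fun y => v y 2) x - pd 2 (fun y => v y 1) x,
    pd 2 (fun y => v y 0) x - pd 0 (fun y => v y 2) x,
    pd 0 (fun y => v y 1) x - pd 1 (fun y => v y 0) x]

def divg (v : V3 → V3) (x : V3) : ℝ := ∑ i, pd i (fun y => v y i) x

def cross3 (a b : V3) : V3 :=
  ![a 1 * b 2 - a 2 * b 1, a 2 * b 0 - a 0 * b 2, a 0 * b 1 - a 1 * b 0]

def dot3 (a b : V3) : ℝ := ∑ i, a i * b i

def IsPolyDeg (k : ℕ) (f : V3 → ℝ) : Prop :=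
  ∃ p : MvPolynomial (Fin 3) ℝ, p.totalDegree ≤ k ∧ ∀ x, f x = MvPolynomial.eval x p

def IsPolyDegV (k : ℕ) (v : V3 → V3) : Prop := ∀ i, IsPolyDeg k fun x => v x i

def Wmem (k : ℕ) (xK : V3) (v : V3 → V3) : Prop :=
  ∃ q r, IsPolyDeg (k + 1) q ∧ IsPolyDegV 1 r ∧ ∀ x, v x = grad q x + cross3 (x - xK) (r x)

def T2 : Set (ℝ × ℝ) := {p | 0 ≤ p.1 ∧ 0 ≤ p.2 ∧ p.1 + p.2 ≤ 1}

def PoincareOp (xK : V3) (q : V3 → V3) (x : V3) : V3 :=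
  - cross3 (x - xK) (∫ t in (0:ℝ)..1, t • q (t • (x - xK) + xK))

open MvPolynomial
open scoped Matrix

theorem RingHom.comp_cross {R S : Type*} [CommRing R] [CommRing S] (f : R →+* S)
    (u v : Fin 3 → R) : f ∘ (u ⨯₃ v) = (f ∘ u) ⨯₃ (f ∘ v) := by
  ext j
  fin_cases j <;> simp [cross_apply]

namespace MvPolynomial

variable {σ R : Type*}

section CommSemiring

variable [CommSemiring R]

theorem totalDegree_pderiv_le (i : σ) (p : MvPolynomial σ R) :
    (pderiv i p).totalDegree ≤ p.totalDegree - 1 := by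
  classical
  refine Finset.sup_le fun m hm => ?_
  rw [mem_support_iff, coeff_pderiv] at hm
  have h := le_totalDegree (mem_support_iff.2 (left_ne_zero_of_mul hm))
  change (m + Finsupp.single i 1).degree ≤ _ at h
  rw [map_add, Finsupp.degree_single] at h
  change m.degree ≤ _
  omega

theorem totalDegree_bind₁_le {τ : Type*} {f : σ → MvPolynomial τ R}
    (hf : ∀ i, (f i).totalDegree ≤ 1) (p : MvPolynomial σ R) :
    (bind₁ f p).totalDegree ≤ p.totalDegree := by
  conv_lhs => rw [p.as_sum]
  rw [map_sum]
  refine totalDegree_finsetSum_le fun d hd => ?_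
  rw [bind₁_monomial]
  calc (C (coeff d p) * ∏ i ∈ d.support, f i ^ d i).totalDegree
      ≤ ∑ i ∈ d.support, d i * (f i).totalDegree :=
        (totalDegree_mul _ _).trans <| by
          rw [totalDegree_C, zero_add]
          exact (totalDegree_finsetProd _ _).trans <|
            Finset.sum_le_sum fun i _ => totalDegree_pow _ _
    _ ≤ ∑ i ∈ d.support, d i :=
      Finset.sum_le_sum fun i _ => by simpa using Nat.mul_le_mul_left _ (hf i)
    _ ≤ p.totalDegree := le_totalDegree hd

variable [Fintype σ]

def euler (p : MvPolynomial σ R) : MvPolynomial σ R := ∑ i, X i * pderiv i p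

theorem coeff_euler (d : σ →₀ ℕ) (p : MvPolynomial σ R) :
    coeff d (euler p) = d.degree • coeff d p := by
  classical
  induction p using MvPolynomial.induction_on' with
  | monomial m a =>
    simp only [euler, X_mul_pderiv_monomial, ← Finset.sum_smul, ← Finsupp.degree_eq_sum,
      coeff_smul]
    rw [coeff_monomial]
    split_ifs with h <;> simp [h]
  | add p q hp hq =>
    simp only [euler, map_add, mul_add, Finset.sum_add_distrib, coeff_add, smul_add] at hp hq ⊢
    rw [hp, hq]

end CommSemiring

section Field

variable [Field R]

/-- `(1 + euler)⁻¹` in characteristic zero; over `ℝ` it is `p ↦ ∫₀¹ p (t • x) dt`. -/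
def rayAverage (p : MvPolynomial σ R) : MvPolynomial σ R :=
  ∑ d ∈ p.support, monomial d (((d.degree : R) + 1)⁻¹ * coeff d p)

theorem coeff_rayAverage (d : σ →₀ ℕ) (p : MvPolynomial σ R) :
    coeff d (rayAverage p) = ((d.degree : R) + 1)⁻¹ * coeff d p := by
  classical
  simp only [rayAverage, coeff_sum, coeff_monomial, Finset.sum_ite_eq', mem_support_iff]
  split_ifs with h
  · rfl
  · rw [not_not.1 h, mul_zero]

theorem totalDegree_rayAverage_le (p : MvPolynomial σ R) :
    (rayAverage p).totalDegree ≤ p.totalDegree :=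
  totalDegree_le_of_support_subset fun d hd => by
    rw [mem_support_iff, coeff_rayAverage] at hd
    exact mem_support_iff.2 (right_ne_zero_of_mul hd)

variable [CharZero R] [Fintype σ]

theorem rayAverage_add_euler (p : MvPolynomial σ R) :
    rayAverage p + euler (rayAverage p) = p := by
  ext d
  rw [coeff_add, coeff_euler, coeff_rayAverage, nsmul_eq_mul, ← one_add_mul, ← mul_assoc,
    add_comm (1 : R), mul_inv_cancel₀ (Nat.cast_add_one_ne_zero _), one_mul]

theorem eq_C_of_euler_eq_zero {p : MvPolynomial σ R} (hp : euler p = 0) :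
    p = C (coeff 0 p) := by
  classical
  ext d
  rw [coeff_C]
  split_ifs with hd
  · rw [hd]
  · have h := coeff_euler d p
    rw [hp, coeff_zero, eq_comm, smul_eq_zero] at h
    exact h.resolve_left (by simpa [Finsupp.degree_eq_zero_iff] using Ne.symm hd)

end Field

section Cross

variable [CommRing R]

theorem totalDegree_cross_le {u v : Fin 3 → MvPolynomial σ R} {a b : ℕ}
    (hu : ∀ i, (u i).totalDegree ≤ a) (hv : ∀ i, (v i).totalDegree ≤ b) (j : Fin 3) :
    ((u ⨯₃ v) j).totalDegree ≤ a + b := by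
  have hmul : ∀ i i', (u i * v i').totalDegree ≤ a + b :=
    fun i i' => (totalDegree_mul _ _).trans (add_le_add (hu i) (hv i'))
  fin_cases j <;>
    exact (totalDegree_sub _ _).trans (max_le (hmul _ _) (hmul _ _))

def pcurl (w : Fin 3 → MvPolynomial (Fin 3) R) : Fin 3 → MvPolynomial (Fin 3) R :=
  ![pderiv 1 (w 2) - pderiv 2 (w 1), pderiv 2 (w 0) - pderiv 0 (w 2),
    pderiv 0 (w 1) - pderiv 1 (w 0)]

theorem totalDegree_pcurl_le {w : Fin 3 → MvPolynomial (Fin 3) R} {n : ℕ}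
    (hw : ∀ i, (w i).totalDegree ≤ n) (j : Fin 3) : (pcurl w j).totalDegree ≤ n - 1 := by
  have hpd : ∀ i i', (pderiv i (w i')).totalDegree ≤ n - 1 :=
    fun i i' => (totalDegree_pderiv_le i _).trans (Nat.sub_le_sub_right (hw i') 1)
  fin_cases j <;>
    exact (totalDegree_sub _ _).trans (max_le (hpd _ _) (hpd _ _))

theorem pcurl_eq_zero_of_totalDegree_eq_zero {w : Fin 3 → MvPolynomial (Fin 3) R}
    (hw : ∀ i, (w i).totalDegree = 0) : pcurl w = 0 := by
  have hpd : ∀ i i', pderiv i (w i') = 0 := fun i i' => by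
    rw [totalDegree_eq_zero_iff_eq_C.1 (hw i'), pderiv_C]
  ext j : 1
  fin_cases j <;> simp [pcurl, hpd]

theorem pderiv_X_dotProduct (h : Fin 3 → MvPolynomial (Fin 3) R) (j : Fin 3) :
    pderiv j (X ⬝ᵥ h) = h j + euler (h j) + (X ⨯₃ pcurl h) j := by
  fin_cases j <;>
    simp [dotProduct, Fin.sum_univ_three, euler, cross_apply, pcurl, pderiv_X] <;>
    ring

theorem exists_eq_pderiv_add_X_cross {K : Type*} [Field K] [CharZero K] {k : ℕ}
    (s : Fin 3 → MvPolynomial (Fin 3) K) (hs : ∀ j, (s j).totalDegree ≤ k) :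
    ∃ (Q : MvPolynomial (Fin 3) K) (r : Fin 3 → MvPolynomial (Fin 3) K),
      Q.totalDegree ≤ k + 1 ∧ (∀ j, (r j).totalDegree ≤ k - 1) ∧ (k = 0 → r = 0) ∧
      s = (fun j => pderiv j Q) + X ⨯₃ r := by
  set h := fun j => rayAverage (s j)
  have hh : ∀ j, (h j).totalDegree ≤ k := fun j => (totalDegree_rayAverage_le _).trans (hs j)
  refine ⟨X ⬝ᵥ h, -pcurl h, ?_, fun j => ?_, fun hk => ?_, ?_⟩
  · refine totalDegree_finsetSum_le fun i _ => (totalDegree_mul _ _).trans ?_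
    have := hh i
    rw [totalDegree_X]
    omega
  · rw [Pi.neg_apply, totalDegree_neg]
    exact totalDegree_pcurl_le hh j
  · subst hk
    rw [pcurl_eq_zero_of_totalDegree_eq_zero fun i => Nat.le_zero.1 (hh i), neg_zero]
  · ext1 j
    rw [Pi.add_apply, map_neg, Pi.neg_apply, pderiv_X_dotProduct, rayAverage_add_euler]
    ring

end Cross

theorem hasFDerivAt_eval {𝕜 σ : Type*} [NontriviallyNormedField 𝕜] [Fintype σ]
    (p : MvPolynomial σ 𝕜) (x : σ → 𝕜) :
    HasFDerivAt (fun y => eval y p)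
      (∑ i, eval x (pderiv i p) • (ContinuousLinearMap.proj i : (σ → 𝕜) →L[𝕜] 𝕜)) x := by
  classical
  induction p using MvPolynomial.induction_on with
  | C a =>
    simp only [eval_C]
    refine (hasFDerivAt_const (𝕜 := 𝕜) a x).congr_fderiv ?_
    ext v
    simp
  | add p q hp hq =>
    simp only [map_add]
    refine (hp.add hq).congr_fderiv ?_
    ext v
    simp [add_mul, Finset.sum_add_distrib]
  | mul_X p i hp =>
    simp only [map_mul, eval_X]
    refine (hp.mul (hasFDerivAt_apply i x)).congr_fderiv ?_
    ext v
    simp [pderiv_X, Pi.single_apply, apply_ite, ite_mul, add_mul, Finset.sum_add_distrib,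
      Finset.mul_sum, mul_assoc]

end MvPolynomial

theorem cross3_eq_cross (a b : V3) : cross3 a b = a ⨯₃ b := rfl

theorem grad_eval (p : MvPolynomial (Fin 3) ℝ) (x : V3) :
    grad (fun y => eval y p) x = fun i => eval x (pderiv i p) := by
  ext i
  simp [grad, pd, (hasFDerivAt_eval p x).fderiv, Pi.single_apply]

theorem grad_comp_add_const (f : V3 → ℝ) (c x : V3) :
    grad (fun y => f (y + c)) x = grad f (x + c) := by
  ext i
  simp only [grad, pd, fderiv_comp_add_right]

theorem IsPolyDeg.comp_add_const {k : ℕ} {f : V3 → ℝ} (hf : IsPolyDeg k f) (c : V3) :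
    IsPolyDeg k fun x => f (x + c) := by
  obtain ⟨p, hp, hfp⟩ := hf
  refine ⟨bind₁ (fun j => X j + C (c j)) p, (totalDegree_bind₁_le (fun j => ?_) p).trans hp,
    fun x => ?_⟩
  · exact (totalDegree_add _ _).trans (by simp)
  · show f (x + c) = _
    rw [hfp (x + c), eval, eval, eval₂Hom_bind₁]
    congr 2
    ext j
    simp

theorem IsPolyDegV.comp_add_const {k : ℕ} {v : V3 → V3} (hv : IsPolyDegV k v) (c : V3) :
    IsPolyDegV k fun x => v (x + c) :=
  fun i => (hv i).comp_add_const c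

theorem IsPolyDeg.add {k : ℕ} {f g : V3 → ℝ} (hf : IsPolyDeg k f) (hg : IsPolyDeg k g) :
    IsPolyDeg k fun x => f x + g x := by
  obtain ⟨p, hp, hfp⟩ := hf
  obtain ⟨q, hq, hgq⟩ := hg
  exact ⟨p + q, (totalDegree_add _ _).trans (max_le hp hq), fun x => by simp [hfp, hgq]⟩

theorem IsPolyDegV.add {k : ℕ} {v w : V3 → V3} (hv : IsPolyDegV k v) (hw : IsPolyDegV k w) :
    IsPolyDegV k fun x => v x + w x :=
  fun i => (hv i).add (hw i)

theorem IsPolyDeg.isPolyDegV_grad {k : ℕ} {q : V3 → ℝ} (hq : IsPolyDeg (k + 1) q) :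
    IsPolyDegV k (grad q) := by
  obtain ⟨p, hp, hqp⟩ := hq
  obtain rfl : q = fun y => eval y p := funext hqp
  exact fun i => ⟨pderiv i p, (totalDegree_pderiv_le i p).trans (by omega),
    fun x => congrFun (grad_eval p x) i⟩

theorem IsPolyDegV.sub_cross {m : ℕ} {r : V3 → V3} (hr : IsPolyDegV m r) (c : V3) :
    IsPolyDegV (m + 1) fun x => (x - c) ⨯₃ r x := by
  choose R hR hrR using hr
  set u : Fin 3 → MvPolynomial (Fin 3) ℝ := fun j => X j - C (c j)
  have hu : ∀ j, (u j).totalDegree ≤ 1 := fun j => (totalDegree_sub _ _).trans (by simp)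
  refine fun j =>
    ⟨(u ⨯₃ R) j, (totalDegree_cross_le hu hR j).trans_eq (add_comm 1 m), fun x => ?_⟩
  have hu' : eval x ∘ u = x - c := funext fun j => by simp [u]
  have hR' : eval x ∘ R = r x := funext fun j => (hrR j x).symm
  show ((x - c) ⨯₃ r x) j = _
  rw [← hu', ← hR', ← RingHom.comp_cross]
  rfl

theorem IsPolyDegV.exists_grad_add_cross {k : ℕ} {v : V3 → V3} (hv : IsPolyDegV k v) :
    ∃ q r, IsPolyDeg (k + 1) q ∧ (k = 0 → ∀ x, r x = 0) ∧ IsPolyDegV (k - 1) r ∧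
      ∀ x, v x = grad q x + x ⨯₃ r x := by
  choose s hs hvs using hv
  obtain ⟨Q, R, hQ, hR, hR0, hsQR⟩ := exists_eq_pderiv_add_X_cross s hs
  refine ⟨fun x => eval x Q, fun x => eval x ∘ R, ⟨Q, hQ, fun _ => rfl⟩,
    fun hk x => by simp [hR0 hk], fun j => ⟨R j, hR j, fun _ => rfl⟩, fun x => ?_⟩
  have hX : eval x ∘ X = x := funext fun j => eval_X _
  calc v x = eval x ∘ s := funext fun j => hvs j x
    _ = (fun j => eval x (pderiv j Q)) + eval x ∘ (X ⨯₃ R) := by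
      rw [hsQR]
      ext j
      simp
    _ = grad (fun y => eval y Q) x + x ⨯₃ (eval x ∘ R) := by
      rw [RingHom.comp_cross, grad_eval, hX]

theorem IsPolyDegV.exists_grad_add_sub_cross {k : ℕ} {v : V3 → V3} (hv : IsPolyDegV k v)
    (c : V3) :
    ∃ q r, IsPolyDeg (k + 1) q ∧ (k = 0 → ∀ x, r x = 0) ∧ IsPolyDegV (k - 1) r ∧
      ∀ x, v x = grad q x + (x - c) ⨯₃ r x := by
  obtain ⟨q, r, hq, hr0, hr, hvqr⟩ := (hv.comp_add_const c).exists_grad_add_cross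
  refine ⟨fun x => q (x + -c), fun x => r (x + -c), hq.comp_add_const _, fun hk x => hr0 hk _,
    hr.comp_add_const _, fun x => ?_⟩
  show v x = grad (fun y => q (y + -c)) x + (x - c) ⨯₃ r (x + -c)
  rw [grad_comp_add_const, ← sub_eq_add_neg, ← hvqr, sub_add_cancel]

theorem IsPolyDeg.grad_eq_zero_of_dotProduct_grad_eq_zero {n : ℕ} {q : V3 → ℝ}
    (hq : IsPolyDeg n q) (h : ∀ x, x ⬝ᵥ grad q x = 0) (x : V3) : grad q x = 0 := by
  obtain ⟨p, -, hqp⟩ := hq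
  obtain rfl : q = fun y => eval y p := funext hqp
  have hp : euler p = 0 := MvPolynomial.funext fun y => by
    simpa [euler, grad_eval, dotProduct] using h y
  rw [grad_eval, eq_C_of_euler_eq_zero hp]
  ext i
  simp

theorem IsPolyDeg.grad_eq_zero_of_sub_dotProduct_grad_eq_zero {n : ℕ} {q : V3 → ℝ}
    (hq : IsPolyDeg n q) (c : V3) (h : ∀ x, (x - c) ⬝ᵥ grad q x = 0) (x : V3) :
    grad q x = 0 := by
  have := (hq.comp_add_const c).grad_eq_zero_of_dotProduct_grad_eq_zero
    (fun y => by simpa [grad_comp_add_const] using h (y + c)) (x - c)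
  rwa [grad_comp_add_const, sub_add_cancel] at this

/-- P_k(ℝ³;ℝ³) = ∇P_{k+1}(ℝ³) ⊕ ((x − x_K) × P_{k−1}(ℝ³;ℝ³)). -/
theorem stmt0 (k : ℕ) (xK : V3) :
    (∀ v : V3 → V3, IsPolyDegV k v ↔
      ∃ q r, IsPolyDeg (k + 1) q ∧
        (if k = 0 then ∀ x, r x = (0 : V3) else IsPolyDegV (k - 1) r) ∧
        ∀ x, v x = grad q x + cross3 (x - xK) (r x)) ∧
    (∀ q r, IsPolyDeg (k + 1) q →
      (if k = 0 then ∀ x, r x = (0 : V3) else IsPolyDegV (k - 1) r) →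
      (∀ x, grad q x + cross3 (x - xK) (r x) = 0) →
      (∀ x, grad q x = 0) ∧ ∀ x, cross3 (x - xK) (r x) = 0) := by
  simp only [cross3_eq_cross]
  refine ⟨fun v => ⟨fun hv => ?_, ?_⟩, fun q r hq _ hqr => ?_⟩
  · obtain ⟨q, r, hq, hr0, hr, hvqr⟩ := hv.exists_grad_add_sub_cross xK
    refine ⟨q, r, hq, ?_, hvqr⟩
    split_ifs with hk
    exacts [hr0 hk, hr]
  · rintro ⟨q, r, hq, hr, hvqr⟩
    rw [show v = fun x => grad q x + (x - xK) ⨯₃ r x from funext hvqr]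
    rcases k with _ | k
    · rw [if_pos rfl] at hr
      simpa [hr] using hq.isPolyDegV_grad
    · exact hq.isPolyDegV_grad.add (hr.sub_cross xK)
  · have hgrad := hq.grad_eq_zero_of_sub_dotProduct_grad_eq_zero xK fun x => by
      rw [eq_neg_of_add_eq_zero_left (hqr x), dotProduct_neg, dot_self_cross, neg_zero]
    exact ⟨hgrad, fun x => by simpa [hgrad x] using hqr x⟩
end
end

section
/- The curl operator is injective on the space {x ↦ (x − x_K) × q(x) : q ∈ P_{k−1}(ℝ³;ℝ³)} of vector polynomials, for any point x_K ∈ ℝ³ and any positive integer k. -/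
open MeasureTheory

noncomputable section

/-! For `u x = (x - xK) × r x` one has the pointwise identity
`Du(x)(x - xK) + u(x) = -(x - xK) × curl u(x)`, which follows from
`curl (a × s) = a div s - 2 s - (a · ∇) s` for `a = x - xK`.
So if `curl u = 0`, then `t ↦ t • u (xK + t • (x - xK))` has zero derivative; it vanishes at
`t = 0`, hence at `t = 1`, i.e. `u x = 0`. Apply this to `r - r'`, using that curl is linear. -/

theorem MvPolynomial.differentiable_eval {n : ℕ} (p : MvPolynomial (Fin n) ℝ) :
    Differentiable ℝ fun x : Fin n → ℝ => eval x p := by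
  induction p using MvPolynomial.induction_on with
  | C a => simp
  | add p q hp hq => simp only [map_add]; exact hp.add hq
  | mul_X p i hp => simp only [map_mul, eval_X]; exact hp.mul (differentiable_apply i)

theorem IsPolyDegV.differentiable {k : ℕ} {v : V3 → V3} (hv : IsPolyDegV k v) :
    Differentiable ℝ v := by
  refine differentiable_pi.2 fun i => ?_
  obtain ⟨p, -, hp⟩ := hv i
  simpa only [funext hp] using p.differentiable_eval

theorem eq_zero_of_fderiv_radial_add_self {E F : Type*} [NormedAddCommGroup E] [NormedSpace ℝ E]
    [NormedAddCommGroup F] [NormedSpace ℝ F] {f : E → F} (hf : Differentiable ℝ f) (c : E)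
    (h : ∀ y, fderiv ℝ f y (y - c) + f y = 0) (x : E) : f x = 0 := by
  have hg : ∀ t : ℝ, HasDerivAt (fun t : ℝ => t • f (c + t • (x - c))) 0 t := by
    intro t
    have hl : HasDerivAt (fun t : ℝ => c + t • (x - c)) (x - c) t := by
      simpa using ((hasDerivAt_id t).smul_const (x - c)).const_add c
    refine ((hasDerivAt_id t).smul ((hf _).hasFDerivAt.comp_hasDerivAt t hl)).congr_deriv ?_
    have := h (c + t • (x - c))
    rw [add_sub_cancel_left, map_smul] at this
    simpa using this
  simpa using is_const_of_deriv_eq_zero (fun t => (hg t).differentiableAt)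
    (fun t => (hg t).deriv) 1 0

theorem fderiv_apply_eq_sum_pd (f : V3 → ℝ) (x v : V3) :
    fderiv ℝ f x v = ∑ j, v j * pd j f x := by
  conv_lhs => rw [← Finset.univ_sum_single v]
  simp only [map_sum, pd]
  refine Finset.sum_congr rfl fun j _ => ?_
  rw [← smul_eq_mul, ← map_smul, ← Pi.single_smul', smul_eq_mul, mul_one]

theorem pd_fun_sub {f g : V3 → ℝ} {x : V3} (hf : DifferentiableAt ℝ f x)
    (hg : DifferentiableAt ℝ g x) (j : Fin 3) :
    pd j (fun y => f y - g y) x = pd j f x - pd j g x := by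
  simp [pd, fderiv_fun_sub hf hg]

theorem curl_fun_sub {u v : V3 → V3} {x : V3} (hu : DifferentiableAt ℝ u x)
    (hv : DifferentiableAt ℝ v x) :
    curl (fun y => u y - v y) x = curl u x - curl v x := by
  have hu' := differentiableAt_pi.1 hu
  have hv' := differentiableAt_pi.1 hv
  funext i
  fin_cases i <;>
    simp only [curl, Fin.isValue, Pi.sub_apply, hu', hv', pd_fun_sub, Fin.zero_eta, Fin.mk_one,
      Fin.reduceFinMk, Matrix.cons_val_zero, Matrix.cons_val_one, Matrix.cons_val] <;> ring

theorem cross3_eq_crossProduct (a b : V3) : cross3 a b = crossProduct a b :=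
  (cross_apply a b).symm

theorem cross3_sub_right (a b c : V3) : cross3 a (b - c) = cross3 a b - cross3 a c := by
  simp only [cross3_eq_crossProduct, map_sub]

theorem differentiable_cross3_sub {r : V3 → V3} (hr : Differentiable ℝ r) (xK : V3) :
    Differentiable ℝ fun z => cross3 (z - xK) (r z) := by
  refine differentiable_pi.2 fun m => ?_
  fin_cases m <;> simp only [cross3, Fin.reduceFinMk, Matrix.cons_val, Pi.sub_apply] <;> fun_prop

theorem pd_cross3_sub_apply {r : V3 → V3} (hr : Differentiable ℝ r) (xK y : V3) (j m : Fin 3) :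
    pd j (fun z => cross3 (z - xK) (r z) m) y
      = cross3 (Pi.single j 1) (r y) m + cross3 (y - xK) (fun n => pd j (fun z => r z n) y) m := by
  fin_cases m <;>
  · simp only [pd, cross3, Fin.reduceFinMk, Matrix.cons_val, Pi.sub_apply]
    rw [fderiv_fun_sub (by fun_prop) (by fun_prop), fderiv_fun_mul (by fun_prop) (by fun_prop),
      fderiv_fun_mul (by fun_prop) (by fun_prop), fderiv_sub_const, fderiv_sub_const]
    simp only [(hasFDerivAt_apply _ y).fderiv, ContinuousLinearMap.proj_apply, add_apply,
      sub_apply, smul_apply, smul_eq_mul]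
    ring

theorem fderiv_cross3_sub_radial_add {r : V3 → V3} (hr : Differentiable ℝ r) (xK y : V3)
    (m : Fin 3) :
    fderiv ℝ (fun z => cross3 (z - xK) (r z) m) y (y - xK) + cross3 (y - xK) (r y) m
      = -cross3 (y - xK) (curl (fun z => cross3 (z - xK) (r z)) y) m := by
  rw [fderiv_apply_eq_sum_pd]
  simp only [curl, pd_cross3_sub_apply hr xK]
  fin_cases m <;>
    simp only [cross3, Pi.sub_apply, Fin.isValue, Fin.zero_eta, Fin.mk_one, Fin.reduceFinMk,
      Matrix.cons_val_zero, Matrix.cons_val_one, Matrix.cons_val, Fin.sum_univ_three,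
      Pi.single_eq_same, Pi.single_eq_of_ne, ne_eq, Fin.reduceEq, not_false_eq_true] <;> ring

theorem cross3_sub_eq_zero_of_curl_eq_zero {r : V3 → V3} (hr : Differentiable ℝ r) (xK : V3)
    (h : ∀ y, curl (fun z => cross3 (z - xK) (r z)) y = 0) (x : V3) :
    cross3 (x - xK) (r x) = 0 := by
  funext m
  refine eq_zero_of_fderiv_radial_add_self (f := fun z => cross3 (z - xK) (r z) m)
    (differentiable_pi.1 (differentiable_cross3_sub hr xK) m) xK (fun y => ?_) x
  rw [fderiv_cross3_sub_radial_add hr xK, h y, cross3_eq_crossProduct, map_zero, Pi.zero_apply,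
    neg_zero]

theorem stmt1_general (k : ℕ) (xK : V3) (r r' : V3 → V3)
    (hr : IsPolyDegV (k - 1) r) (hr' : IsPolyDegV (k - 1) r')
    (h : ∀ x, curl (fun y => cross3 (y - xK) (r y)) x
            = curl (fun y => cross3 (y - xK) (r' y)) x) :
    ∀ x, cross3 (x - xK) (r x) = cross3 (x - xK) (r' x) := by
  have hd := hr.differentiable
  have hd' := hr'.differentiable
  have hcurl : ∀ y, curl (fun z => cross3 (z - xK) ((r - r') z)) y = 0 := fun y => by
    simp only [Pi.sub_apply, cross3_sub_right]
    rw [curl_fun_sub (differentiable_cross3_sub hd xK y) (differentiable_cross3_sub hd' xK y),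
      h y, sub_self]
  intro x
  rw [← sub_eq_zero, ← cross3_sub_right]
  exact cross3_sub_eq_zero_of_curl_eq_zero (hd.sub hd') xK hcurl x

/-- curl is injective on {x ↦ (x − x_K) × q(x) : q ∈ P_{k−1}(ℝ³;ℝ³)}, k ≥ 1. -/
theorem stmt1 (k : ℕ) (hk : 0 < k) (xK : V3) (r r' : V3 → V3)
    (hr : IsPolyDegV (k - 1) r) (hr' : IsPolyDegV (k - 1) r')
    (h : ∀ x, curl (fun y => cross3 (y - xK) (r y)) x
            = curl (fun y => cross3 (y - xK) (r' y)) x) :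
    ∀ x, cross3 (x - xK) (r x) = cross3 (x - xK) (r' x) :=
  stmt1_general k xK r r' hr hr' h
end
end

section
/- Let X, Y be real inner product spaces (or Hilbert spaces) and suppose a: X×X → ℝ is a symmetric bounded bilinear form which is coercive on the kernel Z = {v ∈ X : b(v,μ) = 0 ∀μ ∈ Y} of a bounded bilinear form b: X×Y → ℝ satisfying the inf-sup condition inf_{μ∈Y} sup_{v∈X} b(v,μ)/(‖v‖_X ‖μ‖_Y) ≥ β > 0. Then for every (ũ, λ̃) ∈ X×Y, ‖ũ‖_X + ‖λ̃‖_Y ≤ C sup_{(v,μ)∈X×Y, (v,μ)≠0} (a(ũ,v) + b(v,λ̃) + b(ũ,μ))/(‖v‖_X + ‖μ‖_Y), where C depends only on the continuity, coercivity, and inf-sup constants. -/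
/-!
Let `T : Y → X` be the Riesz representative of `b`, `⟪T μ, v⟫ = b v μ`. The inf-sup condition
says `β ‖μ‖ ≤ ‖T μ‖`, so `T` has closed range and the kernel of `b` is its orthogonal complement:
every `u` splits orthogonally as `u₀ + T μ` with `b u₀ = 0`, and `b u μ = ‖T μ‖ ^ 2`.
The test pair `v = u₀ + s • T l`, `m = t • μ` then gives
`a u₀ u₀ + a (T μ) u₀ + t ‖T μ‖ ^ 2 + s (a u (T l) + ‖T l‖ ^ 2)`; coercivity and Young's inequality
bound this below by a multiple of `‖u‖ ^ 2 + ‖l‖ ^ 2` once `t = (α + M ^ 2 / α) / 2` and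
`s = α / (2 M ^ 2)`, while `‖v‖ + ‖m‖` is at most a multiple of `‖u‖ + ‖l‖`.
-/

open InnerProductSpace

section

variable {X Y : Type*} [NormedAddCommGroup X] [InnerProductSpace ℝ X]
  [NormedAddCommGroup Y] [InnerProductSpace ℝ Y]

theorem half_mul_norm_sq_le_of_inner_eq_zero (a : X →ₗ[ℝ] X →ₗ[ℝ] ℝ) {M α : ℝ} (hα : 0 < α)
    (ha : ∀ u v, |a u v| ≤ M * ‖u‖ * ‖v‖) {u₀ u₁ : X} (hcoer : α * ‖u₀‖ ^ 2 ≤ a u₀ u₀)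
    (horth : ⟪u₀, u₁⟫_ℝ = 0) :
    α / 2 * ‖u₀ + u₁‖ ^ 2 ≤ a (u₀ + u₁) u₀ + (α + M ^ 2 / α) / 2 * ‖u₁‖ ^ 2 := by
  have hcross := neg_le_of_abs_le (ha u₁ u₀)
  have hsq : 0 ≤ (α * ‖u₀‖ - M * ‖u₁‖) ^ 2 / (2 * α) := by positivity
  have hid : (α * ‖u₀‖ - M * ‖u₁‖) ^ 2 / (2 * α) = α / 2 * ‖u₀‖ ^ 2 - M * ‖u₁‖ * ‖u₀‖
      + M ^ 2 / α / 2 * ‖u₁‖ ^ 2 := by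
    field_simp
    ring
  rw [norm_add_sq_real, horth, map_add, LinearMap.add_apply]
  linarith

section flipRiesz

variable [CompleteSpace X]

noncomputable def flipRiesz (B : X →L[ℝ] Y →L[ℝ] ℝ) : Y →L[ℝ] X :=
  (toDual ℝ X).symm.toContinuousLinearEquiv.toContinuousLinearMap.comp B.flip

variable (B : X →L[ℝ] Y →L[ℝ] ℝ)

theorem inner_flipRiesz_left (μ : Y) (v : X) : ⟪flipRiesz B μ, v⟫_ℝ = B v μ := by
  simp [flipRiesz]

theorem apply_flipRiesz_self (μ : Y) : B (flipRiesz B μ) μ = ‖flipRiesz B μ‖ ^ 2 := by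
  rw [← inner_flipRiesz_left, real_inner_self_eq_norm_sq]

theorem norm_flipRiesz_le {M : ℝ} (hM : 0 ≤ M) (hB : ∀ v μ, |B v μ| ≤ M * ‖v‖ * ‖μ‖) (μ : Y) :
    ‖flipRiesz B μ‖ ≤ M * ‖μ‖ := by
  have h := (le_abs_self _).trans (hB (flipRiesz B μ) μ)
  rw [apply_flipRiesz_self] at h
  nlinarith [norm_nonneg (flipRiesz B μ), norm_nonneg μ, mul_nonneg hM (norm_nonneg μ)]

theorem le_norm_flipRiesz {β : ℝ} (hinfsup : ∀ μ : Y, ∃ v : X, v ≠ 0 ∧ β * ‖v‖ * ‖μ‖ ≤ B v μ)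
    (μ : Y) : β * ‖μ‖ ≤ ‖flipRiesz B μ‖ := by
  obtain ⟨v, hv, hvμ⟩ := hinfsup μ
  have hTv : B v μ ≤ ‖flipRiesz B μ‖ * ‖v‖ :=
    inner_flipRiesz_left B μ v ▸ real_inner_le_norm _ _
  have := norm_pos_iff.mpr hv
  nlinarith

theorem isClosed_range_flipRiesz [CompleteSpace Y] {β : ℝ} (hβ : 0 < β)
    (hinfsup : ∀ μ : Y, ∃ v : X, v ≠ 0 ∧ β * ‖v‖ * ‖μ‖ ≤ B v μ) :
    IsClosed ((flipRiesz B).range : Set X) := by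
  refine AntilipschitzWith.isClosed_range (K := (β⁻¹).toNNReal)
    ((flipRiesz B).antilipschitz_of_bound fun μ => ?_) (flipRiesz B).uniformContinuous
  rw [Real.coe_toNNReal _ (inv_nonneg.mpr hβ.le), inv_mul_eq_div, le_div_iff₀ hβ, mul_comm]
  exact le_norm_flipRiesz B hinfsup μ

theorem exists_eq_add_flipRiesz [CompleteSpace Y] {β : ℝ} (hβ : 0 < β)
    (hinfsup : ∀ μ : Y, ∃ v : X, v ≠ 0 ∧ β * ‖v‖ * ‖μ‖ ≤ B v μ) (u : X) :
    ∃ u₀ μ, (∀ ν, B u₀ ν = 0) ∧ u = u₀ + flipRiesz B μ := by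
  have : CompleteSpace ((flipRiesz B).range) :=
    (isClosed_range_flipRiesz B hβ hinfsup).completeSpace_coe
  obtain ⟨_, ⟨μ, rfl⟩, u₀, hu₀, rfl⟩ := ((flipRiesz B).range).exists_add_mem_mem_orthogonal u
  refine ⟨u₀, μ, fun ν => ?_, add_comm _ _⟩
  rw [← inner_flipRiesz_left]
  exact Submodule.inner_right_of_mem_orthogonal (LinearMap.mem_range_self _ ν) hu₀

theorem norm_test_pair_le {M β s t : ℝ} (hM : 0 ≤ M) (hβ : 0 < β) (hs : 0 ≤ s) (ht : 0 ≤ t)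
    (hB : ∀ v μ, |B v μ| ≤ M * ‖v‖ * ‖μ‖)
    (hinfsup : ∀ μ : Y, ∃ v : X, v ≠ 0 ∧ β * ‖v‖ * ‖μ‖ ≤ B v μ) {u₀ : X} {μ : Y}
    (horth : ⟪u₀, flipRiesz B μ⟫_ℝ = 0) (l : Y) :
    ‖u₀ + s • flipRiesz B l‖ + ‖t • μ‖
      ≤ (1 + t / β + s * M) * (‖u₀ + flipRiesz B μ‖ + ‖l‖) := by
  set n := ‖u₀ + flipRiesz B μ‖
  have hpyth : n ^ 2 = ‖u₀‖ ^ 2 + ‖flipRiesz B μ‖ ^ 2 := by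
    rw [norm_add_sq_real, horth]; ring
  have hn : 0 ≤ n := norm_nonneg _
  have hu₀n : ‖u₀‖ ≤ n := by nlinarith [norm_nonneg u₀, norm_nonneg (flipRiesz B μ)]
  have hTμn : ‖flipRiesz B μ‖ ≤ n := by nlinarith [norm_nonneg u₀, norm_nonneg (flipRiesz B μ)]
  have hμ : ‖μ‖ ≤ n / β := by
    rw [le_div_iff₀ hβ]
    linarith [le_norm_flipRiesz B hinfsup μ]
  have hTl : ‖flipRiesz B l‖ ≤ M * ‖l‖ := norm_flipRiesz_le B hM hB l
  calc ‖u₀ + s • flipRiesz B l‖ + ‖t • μ‖ ≤ ‖u₀‖ + s * ‖flipRiesz B l‖ + t * ‖μ‖ := by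
        rw [norm_smul_of_nonneg ht, ← norm_smul_of_nonneg hs]
        gcongr
        exact norm_add_le _ _
    _ ≤ n + s * (M * ‖l‖) + t * (n / β) := by gcongr
    _ ≤ (1 + t / β + s * M) * (n + ‖l‖) := by
        have : 0 ≤ s * M * n + ‖l‖ + t / β * ‖l‖ := by positivity
        linarith [mul_div_assoc t n β, div_mul_eq_mul_div t β n]

end flipRiesz

theorem exists_test_pair_of_inf_sup [CompleteSpace X] [CompleteSpace Y] (a : X →ₗ[ℝ] X →ₗ[ℝ] ℝ)
    (B : X →L[ℝ] Y →L[ℝ] ℝ) {M α β : ℝ} (hM : 0 < M) (hα : 0 < α) (hβ : 0 < β)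
    (ha : ∀ u v, |a u v| ≤ M * ‖u‖ * ‖v‖) (hB : ∀ v μ, |B v μ| ≤ M * ‖v‖ * ‖μ‖)
    (hcoer : ∀ v : X, (∀ μ : Y, B v μ = 0) → α * ‖v‖ ^ 2 ≤ a v v)
    (hinfsup : ∀ μ : Y, ∃ v : X, v ≠ 0 ∧ β * ‖v‖ * ‖μ‖ ≤ B v μ) :
    ∃ K c : ℝ, 0 < K ∧ 0 < c ∧ ∀ (u : X) (l : Y), ∃ (v : X) (m : Y),
      ‖v‖ + ‖m‖ ≤ K * (‖u‖ + ‖l‖) ∧ c * (‖u‖ ^ 2 + ‖l‖ ^ 2) ≤ a u v + B v l + B u m := by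
  set T := flipRiesz B
  have hT : ∀ μ, B (T μ) μ = ‖T μ‖ ^ 2 := apply_flipRiesz_self B
  have hsM : α / (2 * M ^ 2) * M ^ 2 = α / 2 := by field_simp
  set t := (α + M ^ 2 / α) / 2
  set s := α / (2 * M ^ 2)
  have ht : 0 ≤ t := by positivity
  have hs : 0 ≤ s := by positivity
  refine ⟨1 + t / β + s * M, min (α / 4) (s * β ^ 2 / 2), by positivity, by positivity,
    fun u l => ?_⟩
  obtain ⟨u₀, μ, hu₀, rfl⟩ := exists_eq_add_flipRiesz B hβ hinfsup u
  have horth : ⟪u₀, T μ⟫_ℝ = 0 := by rw [real_inner_comm, inner_flipRiesz_left, hu₀]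
  set n := ‖u₀ + T μ‖
  refine ⟨u₀ + s • T l, t • μ, norm_test_pair_le B hM.le hβ hs ht hB hinfsup horth l, ?_⟩
  have hsplit : a (u₀ + T μ) (u₀ + s • T l) + B (u₀ + s • T l) l + B (u₀ + T μ) (t • μ)
      = (a (u₀ + T μ) u₀ + t * ‖T μ‖ ^ 2) + s * (a (u₀ + T μ) (T l) + ‖T l‖ ^ 2) := by
    simp only [map_add, map_smul, add_apply, smul_apply, hu₀, hT, smul_eq_mul]
    ring
  have hkernel := half_mul_norm_sq_le_of_inner_eq_zero a hα ha (hcoer u₀ hu₀) horth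
  have hrange : ‖T l‖ ^ 2 / 2 - M ^ 2 * n ^ 2 / 2 ≤ a (u₀ + T μ) (T l) + ‖T l‖ ^ 2 := by
    nlinarith [neg_le_of_abs_le (ha (u₀ + T μ) (T l)), sq_nonneg (‖T l‖ - M * n)]
  have hl : β * ‖l‖ ≤ ‖T l‖ := le_norm_flipRiesz B hinfsup l
  have hl2 : β ^ 2 * ‖l‖ ^ 2 ≤ ‖T l‖ ^ 2 := by
    rw [← mul_pow]; exact pow_le_pow_left₀ (by positivity) hl 2
  rw [hsplit]
  calc min (α / 4) (s * β ^ 2 / 2) * (n ^ 2 + ‖l‖ ^ 2)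
      ≤ α / 4 * n ^ 2 + s * β ^ 2 / 2 * ‖l‖ ^ 2 := by
        rw [mul_add]
        gcongr
        exacts [min_le_left _ _, min_le_right _ _]
    _ ≤ α / 2 * n ^ 2 + s * (‖T l‖ ^ 2 / 2 - M ^ 2 * n ^ 2 / 2) := by
        nlinarith [mul_le_mul_of_nonneg_left hl2 hs]
    _ ≤ _ := by gcongr

end

theorem stmt13_general (X Y : Type*) [NormedAddCommGroup X] [InnerProductSpace ℝ X]
    [CompleteSpace X] [NormedAddCommGroup Y] [InnerProductSpace ℝ Y] [CompleteSpace Y]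
    (a : X →ₗ[ℝ] X →ₗ[ℝ] ℝ) (b : X →ₗ[ℝ] Y →ₗ[ℝ] ℝ)
    (M α β : ℝ) (hM : 0 < M) (hα : 0 < α) (hβ : 0 < β)
    (ha : ∀ u v, |a u v| ≤ M * ‖u‖ * ‖v‖)
    (hb : ∀ v μ, |b v μ| ≤ M * ‖v‖ * ‖μ‖)
    -- coercivity of a on the kernel Z = {v : b(v,·) = 0}
    (hcoer : ∀ v : X, (∀ μ : Y, b v μ = 0) → α * ‖v‖ ^ 2 ≤ a v v)
    -- inf-sup condition for b with constant β
    (hinfsup : ∀ μ : Y, ∃ v : X, v ≠ 0 ∧ β * ‖v‖ * ‖μ‖ ≤ b v μ) :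
    ∃ C : ℝ, 0 < C ∧ ∀ (u : X) (l : Y), ∃ (v : X) (m : Y), ¬(v = 0 ∧ m = 0) ∧
      (‖u‖ + ‖l‖) * (‖v‖ + ‖m‖) ≤ C * (a u v + b v l + b u m) := by
  let B : X →L[ℝ] Y →L[ℝ] ℝ := b.mkContinuous₂ M fun v μ => hb v μ
  have hBb : ∀ v μ, B v μ = b v μ := fun _ _ => rfl
  obtain ⟨K, c, hK, hc, htest⟩ := exists_test_pair_of_inf_sup a B hM hα hβ ha hb hcoer hinfsup
  simp only [hBb] at htest
  refine ⟨2 * K / c, by positivity, fun u l => ?_⟩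
  by_cases h0 : u = 0 ∧ l = 0
  · obtain ⟨rfl, rfl⟩ := h0
    obtain ⟨v, hv, -⟩ := hinfsup 0
    exact ⟨v, 0, fun h => hv h.1, by simp⟩
  have hq : 0 < ‖u‖ ^ 2 + ‖l‖ ^ 2 := by
    rcases not_and_or.1 h0 with hu | hl
    · exact add_pos_of_pos_of_nonneg (pow_pos (norm_pos_iff.2 hu) 2) (sq_nonneg _)
    · exact add_pos_of_nonneg_of_pos (sq_nonneg _) (pow_pos (norm_pos_iff.2 hl) 2)
  obtain ⟨v, m, hvm, hS⟩ := htest u l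
  refine ⟨v, m, ?_, ?_⟩
  · rintro ⟨rfl, rfl⟩
    simp only [map_zero, LinearMap.zero_apply, add_zero] at hS
    nlinarith
  · calc (‖u‖ + ‖l‖) * (‖v‖ + ‖m‖) ≤ (‖u‖ + ‖l‖) * (K * (‖u‖ + ‖l‖)) := by gcongr
      _ ≤ 2 * K * (‖u‖ ^ 2 + ‖l‖ ^ 2) := by nlinarith [sq_nonneg (‖u‖ - ‖l‖)]
      _ ≤ 2 * K / c * (a u v + b v l + b u m) := by
          rw [div_mul_eq_mul_div, le_div_iff₀ hc]
          nlinarith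

/-- abstract Babuška–Brezzi stability estimate. -/
theorem stmt13 (X Y : Type*) [NormedAddCommGroup X] [InnerProductSpace ℝ X]
    [CompleteSpace X] [NormedAddCommGroup Y] [InnerProductSpace ℝ Y] [CompleteSpace Y]
    (a : X →ₗ[ℝ] X →ₗ[ℝ] ℝ) (b : X →ₗ[ℝ] Y →ₗ[ℝ] ℝ)
    (M α β : ℝ) (hM : 0 < M) (hα : 0 < α) (hβ : 0 < β)
    (hsym : ∀ u v, a u v = a v u)
    (ha : ∀ u v, |a u v| ≤ M * ‖u‖ * ‖v‖)
    (hb : ∀ v μ, |b v μ| ≤ M * ‖v‖ * ‖μ‖)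
    -- coercivity of a on the kernel Z = {v : b(v,·) = 0}
    (hcoer : ∀ v : X, (∀ μ : Y, b v μ = 0) → α * ‖v‖ ^ 2 ≤ a v v)
    -- inf-sup condition for b with constant β
    (hinfsup : ∀ μ : Y, ∃ v : X, v ≠ 0 ∧ β * ‖v‖ * ‖μ‖ ≤ b v μ) :
    ∃ C : ℝ, 0 < C ∧ ∀ (u : X) (l : Y), ∃ (v : X) (m : Y), ¬(v = 0 ∧ m = 0) ∧
      (‖u‖ + ‖l‖) * (‖v‖ + ‖m‖) ≤ C * (a u v + b v l + b u m) :=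
  stmt13_general X Y a b M α β hM hα hβ ha hb hcoer hinfsup
end

section
/- Let K be a tetrahedron, x_K its barycenter, and h_K its diameter. Define the Poincaré operator K_K(q)(x) = −(x − x_K) × ∫₀¹ t q(t(x−x_K)+x_K) dt for q ∈ P₁(K;ℝ³). Then there exists a constant C independent of K (depending only on shape regularity) such that ‖K_K q‖_{L²(K)} ≤ C h_K ‖q‖_{L²(K)} for all q ∈ P₁(K;ℝ³). -/
open MeasureTheory

noncomputable section

open Set AffineMap Module

/-! On an affine field `q` the line integral defining the Poincaré operator is explicit:
`K q (y) = -(y - x_K) × (q y / 3 + q x_K / 6)`, so `|K q (y)| ≲ h_K (|q y| + |q x_K|)` and it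
remains to bound `|q x_K|² |K|` by `∫_K |q|²`. The homothety `φ` with centre `x_K` and ratio
`-1/3` maps the tetrahedron into itself (each vertex goes to the barycenter of the opposite face),
and `x_K = y / 4 + 3 φ(y) / 4`. By convexity `|q x_K|² ≤ |q y|² / 4 + 3 |q (φ y)|² / 4`;
integrating over `K` and changing variables (`φ` has Jacobian `1/27`) gives
`|q x_K|² |K| ≤ 41/2 ∫_K |q|²`. -/

namespace MvPolynomial

variable {σ R : Type*} [CommRing R]

theorem exists_linearMap_eval_eq_of_mem_span_X {h : MvPolynomial σ R}
    (hh : h ∈ Submodule.span R (range X)) :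
    ∃ L : (σ → R) →ₗ[R] R, ∀ x, eval x h = L x := by
  induction hh using Submodule.span_induction with
  | mem _ hX =>
    obtain ⟨i, rfl⟩ := hX
    exact ⟨LinearMap.proj i, fun x => eval_X i⟩
  | zero => exact ⟨0, by simp⟩
  | add _ _ _ _ h₁ h₂ =>
    obtain ⟨L₁, h₁⟩ := h₁
    obtain ⟨L₂, h₂⟩ := h₂
    exact ⟨L₁ + L₂, by simp [h₁, h₂]⟩
  | smul c _ _ h =>
    obtain ⟨L, h⟩ := h
    exact ⟨c • L, by simp [h]⟩

theorem C_coeff_zero_add_homogeneousComponent_one {p : MvPolynomial σ R}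
    (hp : p.totalDegree ≤ 1) : C (coeff 0 p) + homogeneousComponent 1 p = p := by
  conv_rhs => rw [← sum_homogeneousComponent p]
  rw [Finset.sum_subset (Finset.range_subset_range.2 (Nat.succ_le_succ hp))]
  · simp [Finset.sum_range_succ]
  · intro i _ hi
    exact homogeneousComponent_eq_zero _ _ (by simpa using hi)

theorem exists_affineMap_eval_eq_of_totalDegree_le_one {p : MvPolynomial σ R}
    (hp : p.totalDegree ≤ 1) :
    ∃ A : (σ → R) →ᵃ[R] R, ∀ x, eval x p = A x := by
  have hlin : homogeneousComponent 1 p ∈ Submodule.span R (range X) := by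
    rw [← homogeneousSubmodule_one_eq_span_X]
    exact homogeneousComponent_isHomogeneous 1 p
  obtain ⟨L, hL⟩ := exists_linearMap_eval_eq_of_mem_span_X hlin
  refine ⟨L.toAffineMap + AffineMap.const R _ (coeff 0 p), fun x => ?_⟩
  conv_lhs => rw [← C_coeff_zero_add_homogeneousComponent_one hp]
  simp [hL, add_comm]

end MvPolynomial

theorem IsPolyDegV.exists_affineMap {q : V3 → V3} (hq : IsPolyDegV 1 q) :
    ∃ A : V3 →ᵃ[ℝ] V3, ⇑A = q := by
  choose p hp hq using hq
  choose A hA using fun i => MvPolynomial.exists_affineMap_eval_eq_of_totalDegree_le_one (hp i)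
  exact ⟨AffineMap.pi A, funext fun y => funext fun i => by simp [hq, hA]⟩

theorem integral_smul_affineMap_lineMap {E F : Type*} [AddCommGroup E] [Module ℝ E]
    [NormedAddCommGroup F] [NormedSpace ℝ F] [CompleteSpace F] (A : E →ᵃ[ℝ] F) (a y : E) :
    ∫ t in (0 : ℝ)..1, t • A (t • (y - a) + a) = (3 : ℝ)⁻¹ • A y + (6 : ℝ)⁻¹ • A a := by
  have hline : ∀ t : ℝ, t • A (t • (y - a) + a) = t • A a + t ^ 2 • (A y - A a) := fun t => by
    rw [← lineMap_apply_module', apply_lineMap, lineMap_apply_module']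
    module
  simp_rw [hline]
  rw [intervalIntegral.integral_add, intervalIntegral.integral_smul_const,
    intervalIntegral.integral_smul_const, integral_id, integral_pow]
  · module
  all_goals exact Continuous.intervalIntegrable (by fun_prop) 0 1

theorem norm_cross3_le (a b : V3) : ‖cross3 a b‖ ≤ 2 * ‖a‖ * ‖b‖ := by
  have hterm : ∀ i j, ‖a i * b j‖ ≤ ‖a‖ * ‖b‖ := fun i j => by
    rw [norm_mul]
    exact mul_le_mul (norm_le_pi_norm a i) (norm_le_pi_norm b j) (norm_nonneg _) (norm_nonneg _)
  have hcomp : ∀ i j k l, ‖a i * b j - a k * b l‖ ≤ 2 * ‖a‖ * ‖b‖ := fun i j k l => by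
    linarith [norm_sub_le (a i * b j) (a k * b l), hterm i j, hterm k l]
  refine (pi_norm_le_iff_of_nonneg (by positivity)).2 fun i => ?_
  fin_cases i <;> exact hcomp ..

theorem norm_PoincareOp_affineMap_le (A : V3 →ᵃ[ℝ] V3) (xK y : V3) :
    ‖PoincareOp xK A y‖ ≤ ‖y - xK‖ * (‖A y‖ + ‖A xK‖) := by
  rw [PoincareOp, integral_smul_affineMap_lineMap, norm_neg]
  have hmean : ‖(3 : ℝ)⁻¹ • A y + (6 : ℝ)⁻¹ • A xK‖ ≤ (3 : ℝ)⁻¹ * ‖A y‖ + (6 : ℝ)⁻¹ * ‖A xK‖ :=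
    (norm_add_le _ _).trans_eq (by simp [norm_smul])
  calc _ ≤ 2 * ‖y - xK‖ * ‖(3 : ℝ)⁻¹ • A y + (6 : ℝ)⁻¹ • A xK‖ := norm_cross3_le _ _
    _ ≤ 2 * ‖y - xK‖ * ((3 : ℝ)⁻¹ * ‖A y‖ + (6 : ℝ)⁻¹ * ‖A xK‖) := by gcongr
    _ ≤ ‖y - xK‖ * (‖A y‖ + ‖A xK‖) := by
      nlinarith [norm_nonneg (y - xK), norm_nonneg (A y), norm_nonneg (A xK)]

section Simplex

variable {E : Type*} [AddCommGroup E] [Module ℝ E] {n : ℕ}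

theorem barycenter_mem_convexHull (x : Fin (n + 1) → E) :
    ((n : ℝ) + 1)⁻¹ • ∑ i, x i ∈ convexHull ℝ (range x) := by
  simpa [Finset.centerMass] using Finset.univ.centerMass_mem_convexHull (w := fun _ => (1 : ℝ))
    (fun _ _ => zero_le_one) (by simp; positivity) (fun i _ => mem_range_self (f := x) i)

theorem mapsTo_homothety_barycenter_convexHull (hn : n ≠ 0) (x : Fin (n + 1) → E) :
    MapsTo (homothety (((n : ℝ) + 1)⁻¹ • ∑ i, x i) (-(n : ℝ)⁻¹))
      (convexHull ℝ (range x)) (convexHull ℝ (range x)) := by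
  set φ := homothety (((n : ℝ) + 1)⁻¹ • ∑ i, x i) (-(n : ℝ)⁻¹)
  have hvertex : ∀ i, φ (x i) ∈ convexHull ℝ (range x) := fun i => by
    have hφ : φ (x i) = (Finset.univ.erase i).centerMass (fun _ => (1 : ℝ)) x := by
      have hsum : ∑ j, x j = ∑ j ∈ Finset.univ.erase i, x j + x i :=
        (Finset.sum_erase_add _ _ (Finset.mem_univ i)).symm
      have : (n : ℝ) ≠ 0 := by exact_mod_cast hn
      simp only [φ, Finset.centerMass, homothety_apply, vsub_eq_sub, vadd_eq_add, one_smul,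
        Finset.sum_const, Finset.card_erase_of_mem (Finset.mem_univ i), Finset.card_univ,
        Fintype.card_fin, add_tsub_cancel_right, nsmul_eq_mul, mul_one, hsum]
      match_scalars <;> field_simp <;> ring
    rw [hφ]
    refine Finset.centerMass_mem_convexHull _ (fun _ _ => zero_le_one) ?_
      (fun j _ => mem_range_self j)
    simp [Finset.card_erase_of_mem, Nat.pos_of_ne_zero hn]
  intro y hy
  have : φ y ∈ convexHull ℝ (φ '' range x) := by
    rw [← AffineMap.image_convexHull]
    exact mem_image_of_mem φ hy
  refine convexHull_min ?_ (convex_convexHull ℝ _) this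
  rintro _ ⟨_, ⟨i, rfl⟩, rfl⟩
  exact hvertex i

end Simplex

theorem sq_norm_apply_le_of_homothety {E F : Type*} [AddCommGroup E] [Module ℝ E]
    [NormedAddCommGroup F] [NormedSpace ℝ F] (A : E →ᵃ[ℝ] F) (c y : E) {n : ℝ} (hn : 0 < n) :
    ‖A c‖ ^ 2 ≤ (n + 1)⁻¹ * ‖A y‖ ^ 2 + n / (n + 1) * ‖A (homothety c (-n⁻¹) y)‖ ^ 2 := by
  set z := homothety c (-n⁻¹) y with hz
  have hAc : A c = (n / (n + 1)) • A z + (n + 1)⁻¹ • A y := by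
    have hc : c = lineMap z y (n + 1)⁻¹ := by
      rw [lineMap_apply_module, hz, homothety_apply, vsub_eq_sub, vadd_eq_add]
      match_scalars <;> field_simp <;> ring
    rw [hc, apply_lineMap, lineMap_apply_module]
    congr 2
    field_simp
    ring
  have hconv := ((convexOn_norm convex_univ).pow (fun _ _ => norm_nonneg _) 2).2
    (mem_univ (A z)) (mem_univ (A y))
    (by positivity : 0 ≤ n / (n + 1)) (by positivity : (0 : ℝ) ≤ (n + 1)⁻¹) (by field_simp)
  calc ‖A c‖ ^ 2 = (norm ^ 2) ((n / (n + 1)) • A z + (n + 1)⁻¹ • A y) := by rw [hAc]; rfl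
    _ ≤ _ := hconv
    _ = _ := by simp only [Pi.pow_apply, smul_eq_mul]; ring

section Homothety

variable {E F : Type*} [NormedAddCommGroup E] [NormedSpace ℝ E] [FiniteDimensional ℝ E]
  [MeasurableSpace E] [BorelSpace E] (μ : Measure E) [μ.IsAddHaarMeasure]
  [NormedAddCommGroup F] [NormedSpace ℝ F]

theorem setIntegral_comp_homothety_le {K : Set E} (hK : MeasurableSet K) (c : E) {r : ℝ}
    (hr : r ≠ 0) (hmaps : MapsTo (homothety c r) K K) {g : E → ℝ} (hg₀ : 0 ≤ g)
    (hg : IntegrableOn g K μ) :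
    ∫ y in K, g (homothety c r y) ∂μ ≤ (|r| ^ finrank ℝ E)⁻¹ * ∫ y in K, g y ∂μ := by
  have hφ : ⇑(homothety c r) = fun y => r • (y - c) + c := funext fun y => homothety_apply c r y
  have hderiv : ∀ y ∈ K, HasFDerivWithinAt (homothety c r) (r • ContinuousLinearMap.id ℝ E) K y :=
    fun y _ => hφ ▸ (((hasFDerivAt_id y).sub_const c).const_smul r).add_const c |>.hasFDerivWithinAt
  have hinj : InjOn (homothety c r) K := fun u _ v _ h => by
    simpa [hφ, smul_right_injective E hr |>.eq_iff] using h
  have hchange := integral_image_eq_integral_abs_det_fderiv_smul μ hK hderiv hinj g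
  have hdet : (r • ContinuousLinearMap.id ℝ E).det = r ^ finrank ℝ E :=
    (LinearMap.det_smul r LinearMap.id).trans (by simp)
  rw [hdet, abs_pow] at hchange
  simp only [smul_eq_mul, integral_const_mul] at hchange
  have hpos : 0 < |r| ^ finrank ℝ E := by positivity
  calc ∫ y in K, g (homothety c r y) ∂μ
        = (|r| ^ finrank ℝ E)⁻¹ * ∫ y in homothety c r '' K, g y ∂μ := by
        rw [hchange, inv_mul_cancel_left₀ hpos.ne']
    _ ≤ (|r| ^ finrank ℝ E)⁻¹ * ∫ y in K, g y ∂μ := by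
        gcongr ?_ * ?_
        exact setIntegral_mono_set hg (.of_forall hg₀) hmaps.image_subset.eventuallyLE

theorem sq_norm_apply_mul_measureReal_le {K : Set E} (hK : IsCompact K) {c : E} {n : ℝ}
    (hn : 0 < n) (hmaps : MapsTo (homothety c (-n⁻¹)) K K) (A : E →ᵃ[ℝ] F) :
    ‖A c‖ ^ 2 * μ.real K ≤ (1 + n ^ (finrank ℝ E + 1)) / (n + 1) * ∫ y in K, ‖A y‖ ^ 2 ∂μ := by
  set φ := homothety c (-n⁻¹)
  have hA : Continuous A := A.continuous_of_finiteDimensional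
  have hφ : Continuous φ := φ.continuous_of_finiteDimensional
  have hint : IntegrableOn (fun y => ‖A y‖ ^ 2) K μ :=
    (by fun_prop : Continuous fun y => ‖A y‖ ^ 2).continuousOn.integrableOn_compact hK
  have hintφ : IntegrableOn (fun y => ‖A (φ y)‖ ^ 2) K μ :=
    (by fun_prop : Continuous fun y => ‖A (φ y)‖ ^ 2).continuousOn.integrableOn_compact hK
  have hcomp : ∫ y in K, ‖A (φ y)‖ ^ 2 ∂μ ≤ n ^ finrank ℝ E * ∫ y in K, ‖A y‖ ^ 2 ∂μ := by
    simpa [abs_of_pos hn] using setIntegral_comp_homothety_le μ hK.measurableSet c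
      (neg_ne_zero.2 (inv_ne_zero hn.ne')) hmaps (g := fun y => ‖A y‖ ^ 2)
      (fun _ => by positivity) hint
  have hI : 0 ≤ ∫ y in K, ‖A y‖ ^ 2 ∂μ :=
    setIntegral_nonneg hK.measurableSet fun _ _ => by positivity
  calc ‖A c‖ ^ 2 * μ.real K = ∫ _ in K, ‖A c‖ ^ 2 ∂μ := by
        rw [setIntegral_const, smul_eq_mul, mul_comm]
    _ ≤ ∫ y in K, ((n + 1)⁻¹ * ‖A y‖ ^ 2 + n / (n + 1) * ‖A (φ y)‖ ^ 2) ∂μ :=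
        setIntegral_mono_on (integrableOn_const hK.measure_lt_top.ne)
          ((hint.const_mul _).fun_add (hintφ.const_mul _)) hK.measurableSet
          fun y _ => sq_norm_apply_le_of_homothety A c y hn
    _ = (n + 1)⁻¹ * ∫ y in K, ‖A y‖ ^ 2 ∂μ + n / (n + 1) * ∫ y in K, ‖A (φ y)‖ ^ 2 ∂μ := by
        rw [integral_add (hint.const_mul _) (hintφ.const_mul _), integral_const_mul,
          integral_const_mul]
    _ ≤ (n + 1)⁻¹ * ∫ y in K, ‖A y‖ ^ 2 ∂μ +
          n / (n + 1) * (n ^ finrank ℝ E * ∫ y in K, ‖A y‖ ^ 2 ∂μ) := by gcongr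
    _ = _ := by field_simp; ring

end Homothety

theorem setIntegral_sq_norm_PoincareOp_le (A : V3 →ᵃ[ℝ] V3) {K : Set V3} (hK : IsCompact K)
    {xK : V3} (hxK : xK ∈ K) :
    ∫ y in K, ‖PoincareOp xK A y‖ ^ 2 ≤
      2 * Metric.diam K ^ 2 * ((∫ y in K, ‖A y‖ ^ 2) + ‖A xK‖ ^ 2 * volume.real K) := by
  have hA : Continuous A := A.continuous_of_finiteDimensional
  have hint : IntegrableOn (fun y => ‖A y‖ ^ 2) K :=
    (by fun_prop : Continuous fun y => ‖A y‖ ^ 2).continuousOn.integrableOn_compact hK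
  have hconst : IntegrableOn (fun _ => ‖A xK‖ ^ 2) K := integrableOn_const hK.measure_lt_top.ne
  have hpt : ∀ y ∈ K,
      ‖PoincareOp xK A y‖ ^ 2 ≤ 2 * Metric.diam K ^ 2 * (‖A y‖ ^ 2 + ‖A xK‖ ^ 2) := by
    intro y hy
    have hdist : ‖y - xK‖ ≤ Metric.diam K := by
      rw [← dist_eq_norm]
      exact Metric.dist_le_diam_of_mem hK.isBounded hy hxK
    calc ‖PoincareOp xK A y‖ ^ 2 ≤ (Metric.diam K * (‖A y‖ + ‖A xK‖)) ^ 2 := by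
          gcongr
          exact (norm_PoincareOp_affineMap_le A xK y).trans (by gcongr)
      _ ≤ _ := by nlinarith [sq_nonneg (‖A y‖ - ‖A xK‖), sq_nonneg (Metric.diam K)]
  calc ∫ y in K, ‖PoincareOp xK A y‖ ^ 2
      ≤ ∫ y in K, 2 * Metric.diam K ^ 2 * (‖A y‖ ^ 2 + ‖A xK‖ ^ 2) :=
        integral_mono_of_nonneg (.of_forall fun _ => by positivity)
          ((hint.fun_add hconst).const_mul _)
          ((ae_restrict_iff' hK.measurableSet).2 (.of_forall hpt))
    _ = _ := by
        rw [integral_const_mul, integral_add hint hconst, setIntegral_const, smul_eq_mul,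
          mul_comm (volume.real K)]

theorem stmt14_general (γ : ℝ) :
    ∃ C : ℝ, 0 < C ∧ ∀ x : Fin 4 → V3, AffineIndependent ℝ x →
      ∀ K : Set V3, K = convexHull ℝ (Set.range x) →
      ∀ hK : ℝ, hK = Metric.diam K →
      hK ^ 3 ≤ γ * (volume K).toReal →
      ∀ xK : V3, xK = (4 : ℝ)⁻¹ • (x 0 + x 1 + x 2 + x 3) →
      ∀ q : V3 → V3, IsPolyDegV 1 q →
      (∫ y in K, ‖PoincareOp xK q y‖ ^ 2) ≤ C ^ 2 * hK ^ 2 * ∫ y in K, ‖q y‖ ^ 2 := by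
  refine ⟨7, by norm_num, ?_⟩
  rintro x - K rfl _ rfl - xK hxK q hq
  obtain ⟨A, rfl⟩ := hq.exists_affineMap
  replace hxK : xK = (((3 : ℕ) : ℝ) + 1)⁻¹ • ∑ i, x i := by
    rw [hxK, Fin.sum_univ_four]
    norm_num
  have hK : IsCompact (convexHull ℝ (range x)) := (finite_range x).isCompact_convexHull (𝕜 := ℝ)
  have hbary := sq_norm_apply_mul_measureReal_le volume hK (c := xK) three_pos
    (by rw [hxK]; exact_mod_cast mapsTo_homothety_barycenter_convexHull three_ne_zero x) A
  rw [finrank_fin_fun] at hbary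
  set K := convexHull ℝ (range x)
  have hI : 0 ≤ ∫ y in K, ‖A y‖ ^ 2 := setIntegral_nonneg hK.measurableSet fun _ _ => by positivity
  calc _ ≤ 2 * Metric.diam K ^ 2 * ((∫ y in K, ‖A y‖ ^ 2) + ‖A xK‖ ^ 2 * volume.real K) :=
        setIntegral_sq_norm_PoincareOp_le A hK (hxK ▸ barycenter_mem_convexHull x)
    _ ≤ _ := by nlinarith [sq_nonneg (Metric.diam K)]

/-- ‖K_K q‖_{L²(K)} ≤ C h_K ‖q‖_{L²(K)} for q ∈ P₁(K;ℝ³), with C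
depending only on the shape-regularity constant γ (h_K³ ≤ γ|K|). -/
theorem stmt14 (γ : ℝ) (hγ : 0 < γ) :
    ∃ C : ℝ, 0 < C ∧ ∀ x : Fin 4 → V3, AffineIndependent ℝ x →
      ∀ K : Set V3, K = convexHull ℝ (Set.range x) →
      ∀ hK : ℝ, hK = Metric.diam K →
      hK ^ 3 ≤ γ * (volume K).toReal →
      ∀ xK : V3, xK = (4 : ℝ)⁻¹ • (x 0 + x 1 + x 2 + x 3) →
      ∀ q : V3 → V3, IsPolyDegV 1 q →
      (∫ y in K, ‖PoincareOp xK q y‖ ^ 2) ≤ C ^ 2 * hK ^ 2 * ∫ y in K, ‖q y‖ ^ 2 :=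
  stmt14_general γ
end
end

section
/- Let K be a tetrahedron with barycenter x_K and let v ∈ W_k(K) = ∇P_{k+1}(K) ⊕ ((x−x_K) × P₁(K;ℝ³)), k ∈ {0,1}. Then inf over q ∈ P_{k+1}(K) of ‖v − ∇q‖_{L²(K)} ≤ C h_K ‖curl v‖_{L²(K)}, with C depending only on the shape regularity of K. -/
open MeasureTheory

noncomputable section

lemma contDiff_eval_poly (p : MvPolynomial (Fin 3) ℝ) :
    ContDiff ℝ (⊤ : ℕ∞) (fun x : V3 => MvPolynomial.eval x p) := by
  induction p using MvPolynomial.induction_on with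
  | C a => simpa using contDiff_const
  | add p q hp hq => simpa using hp.add hq
  | mul_X p i hp => simpa using hp.mul (contDiff_apply ℝ ℝ i)

lemma IsPolyDeg.contDiff {k : ℕ} {f : V3 → ℝ} (h : IsPolyDeg k f) : ContDiff ℝ (⊤ : ℕ∞) f := by
  obtain ⟨p, -, hp⟩ := h
  have : f = fun x => MvPolynomial.eval x p := funext hp
  rw [this]; exact contDiff_eval_poly p

lemma monomial_of_sum_le_one {m : Fin 3 →₀ ℕ} (h : (m.sum fun _ e => e) ≤ 1) :
    m = 0 ∨ ∃ j, m = Finsupp.single j 1 := by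
  rcases Finset.eq_empty_or_nonempty m.support with hs | ⟨j, hj⟩
  · left; ext i
    have := Finsupp.support_eq_empty.1 hs
    simp [this]
  · right; refine ⟨j, ?_⟩
    have hj1 : 1 ≤ m j := Nat.one_le_iff_ne_zero.2 (Finsupp.mem_support_iff.1 hj)
    have hsum : (m.sum fun _ e => e) = ∑ i ∈ m.support, m i := rfl
    have hle : m j ≤ ∑ i ∈ m.support, m i :=
      Finset.single_le_sum (fun _ _ => Nat.zero_le _) hj
    have hmj : m j = 1 := le_antisymm (by omega) hj1
    have hothers : ∀ i, i ≠ j → m i = 0 := by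
      intro i hij
      by_contra hne
      have hi : i ∈ m.support := Finsupp.mem_support_iff.2 hne
      have hsub : ({i, j} : Finset (Fin 3)) ⊆ m.support := by
        intro t ht; simp only [Finset.mem_insert, Finset.mem_singleton] at ht
        rcases ht with rfl | rfl <;> assumption
      have : m i + m j ≤ ∑ t ∈ m.support, m t := by
        calc m i + m j = ∑ t ∈ ({i, j} : Finset (Fin 3)), m t := by
              rw [Finset.sum_insert (by simpa using hij), Finset.sum_singleton]
          _ ≤ ∑ t ∈ m.support, m t :=
              Finset.sum_le_sum_of_subset hsub
      have : 1 ≤ m i := Nat.one_le_iff_ne_zero.2 hne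
      omega
    ext i
    rcases eq_or_ne i j with rfl | hij
    · simp [hmj]
    · rw [hothers i hij, Finsupp.single_apply, if_neg (fun h => hij h.symm)]

lemma isPolyDeg_one_repr {f : V3 → ℝ} (h : IsPolyDeg 1 f) :
    ∃ (a : ℝ) (b : V3), ∀ x, f x = a + ∑ j, b j * x j := by
  obtain ⟨p, hdeg, hf⟩ := h
  refine ⟨MvPolynomial.coeff 0 p, fun j => MvPolynomial.coeff (Finsupp.single j 1) p, fun x => ?_⟩
  have hp : p = MvPolynomial.C (MvPolynomial.coeff 0 p)
      + ∑ j : Fin 3, MvPolynomial.C (MvPolynomial.coeff (Finsupp.single j 1) p)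
        * MvPolynomial.X j := by
    apply MvPolynomial.ext
    intro m
    rcases Nat.lt_or_ge 1 (m.sum fun _ e => e) with hm | hm
    · have h0 : MvPolynomial.coeff m p = 0 :=
        MvPolynomial.coeff_eq_zero_of_totalDegree_lt (lt_of_le_of_lt hdeg hm)
      have hmne : m ≠ 0 := by
        intro h; rw [h] at hm; simp [Finsupp.sum_zero_index] at hm
      have hmns : ∀ j : Fin 3, ¬ (Finsupp.single j 1 = m) := by
        intro j hjm
        rw [← hjm] at hm
        simp [Finsupp.sum_single_index] at hm
      have h0m : ¬ ((0 : Fin 3 →₀ ℕ) = m) := fun h => hmne h.symm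
      simp [h0, MvPolynomial.coeff_add, MvPolynomial.coeff_sum, MvPolynomial.coeff_C,
        MvPolynomial.coeff_C_mul, MvPolynomial.coeff_X', hmns, if_neg h0m]
    · rcases monomial_of_sum_le_one hm with rfl | ⟨j, rfl⟩
      · have hns : ∀ j : Fin 3, ¬ (Finsupp.single j 1 = (0 : Fin 3 →₀ ℕ)) := by
          intro j hj
          have := DFunLike.congr_fun hj j
          simp at this
        simp [MvPolynomial.coeff_add, MvPolynomial.coeff_sum, MvPolynomial.coeff_C,
          MvPolynomial.coeff_C_mul, MvPolynomial.coeff_X', hns]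
      · have hsingle : ∀ i : Fin 3, (Finsupp.single i 1 = Finsupp.single j 1) ↔ i = j := by
          intro i
          constructor
          · intro h
            by_contra hij
            have := DFunLike.congr_fun h i
            simp only [Finsupp.single_apply, if_pos rfl,
              if_neg (fun h : j = i => hij h.symm)] at this
            simp at this
          · rintro rfl; rfl
        have hne0 : ¬ ((0 : Fin 3 →₀ ℕ) = Finsupp.single j 1) := by
          intro h
          have := DFunLike.congr_fun h j
          simp at this
        simp [MvPolynomial.coeff_add, MvPolynomial.coeff_sum, MvPolynomial.coeff_C,
          MvPolynomial.coeff_C_mul, MvPolynomial.coeff_X', hsingle, hne0,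
          Finset.sum_ite_eq']
  rw [hf x]
  conv_lhs => rw [hp]
  simp [MvPolynomial.eval_sum]
  try ring

-- coordinate minus const
lemma hasFDerivAt_coord (a : Fin 3) (z : ℝ) (x : V3) :
    HasFDerivAt (fun y : V3 => y a - z)
      (ContinuousLinearMap.proj (R := ℝ) (φ := fun _ : Fin 3 => ℝ) a) x := by
  simpa using ((ContinuousLinearMap.proj (R := ℝ) (φ := fun _ : Fin 3 => ℝ) a).hasFDerivAt
    (x := x)).sub_const z

lemma pd_coord (k a : Fin 3) (z : ℝ) (x : V3) :
    pd k (fun y => y a - z) x = if a = k then 1 else 0 := by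
  unfold pd
  rw [(hasFDerivAt_coord a z x).fderiv]
  simp [Pi.single_apply]

def affCLM (B : V3) : V3 →L[ℝ] ℝ :=
  ∑ j, B j • ContinuousLinearMap.proj (R := ℝ) (φ := fun _ : Fin 3 => ℝ) j

lemma hasFDerivAt_aff (c : ℝ) (B : V3) (x : V3) :
    HasFDerivAt (fun y : V3 => c + ∑ j, B j * y j) (affCLM B) x := by
  have : HasFDerivAt (fun y : V3 => ∑ j, B j * y j) (affCLM B) x := by
    apply HasFDerivAt.fun_sum
    intro j _
    exact ((ContinuousLinearMap.proj (R := ℝ) (φ := fun _ : Fin 3 => ℝ) j).hasFDerivAt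
      (x := x)).const_mul (B j)
  simpa using this.const_add c

lemma affCLM_apply_single (B : V3) (k : Fin 3) : affCLM B (Pi.single k 1) = B k := by
  simp [affCLM, ContinuousLinearMap.sum_apply, Pi.single_apply]

lemma pd_aff (k : Fin 3) (c : ℝ) (B : V3) (x : V3) :
    pd k (fun y => c + ∑ j, B j * y j) x = B k := by
  unfold pd
  rw [(hasFDerivAt_aff c B x).fderiv, affCLM_apply_single]

lemma pd_sub (k : Fin 3) {f g : V3 → ℝ} (x : V3) (hf : DifferentiableAt ℝ f x)
    (hg : DifferentiableAt ℝ g x) :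
    pd k (fun y => f y - g y) x = pd k f x - pd k g x := by
  unfold pd
  rw [fderiv_fun_sub hf hg]
  rfl

lemma pd_mul (k : Fin 3) {f g : V3 → ℝ} (x : V3) (hf : DifferentiableAt ℝ f x)
    (hg : DifferentiableAt ℝ g x) :
    pd k (fun y => f y * g y) x = pd k f x * g x + f x * pd k g x := by
  unfold pd
  rw [fderiv_fun_mul hf hg]
  simp [ContinuousLinearMap.add_apply, ContinuousLinearMap.smul_apply]
  ring

lemma pd_cross_term (k a : Fin 3) (za c : ℝ) (B : V3) (x : V3) :
    pd k (fun y => (y a - za) * (c + ∑ j, B j * y j)) x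
      = (if a = k then 1 else 0) * (c + ∑ j, B j * x j) + (x a - za) * B k := by
  rw [pd_mul k x (hasFDerivAt_coord a za x).differentiableAt
    (hasFDerivAt_aff c B x).differentiableAt, pd_coord, pd_aff]

lemma pd_grad_symm {q : V3 → ℝ} (hq : ContDiff ℝ (⊤ : ℕ∞) q) (i j : Fin 3) (x : V3) :
    pd i (fun y => grad q y j) x = pd j (fun y => grad q y i) x := by
  have hf' : ContDiff ℝ (⊤ : ℕ∞) (fderiv ℝ q) := hq.fderiv_right (by simp)
  have hdiffq : ∀ y, HasFDerivAt q (fderiv ℝ q y) y := fun y =>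
    (hq.differentiable (by simp) y).hasFDerivAt
  have hdf : DifferentiableAt ℝ (fderiv ℝ q) x :=
    (hf'.differentiable (by simp)) x
  have hx : HasFDerivAt (fderiv ℝ q) (fderiv ℝ (fderiv ℝ q) x) x := hdf.hasFDerivAt
  have hsymm := second_derivative_symmetric hdiffq hx (Pi.single i 1) (Pi.single j 1)
  have key : ∀ a b : Fin 3,
      pd a (fun y => grad q y b) x = fderiv ℝ (fderiv ℝ q) x (Pi.single a 1) (Pi.single b 1) := by
    intro a b
    have : (fun y => grad q y b) = fun y => (fderiv ℝ q y) (Pi.single b 1) := rfl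
    unfold pd
    rw [this, fderiv_clm_apply hdf (differentiableAt_const _)]
    simp
  rw [key i j, key j i]
  exact hsymm

lemma pd_add (k : Fin 3) {f g : V3 → ℝ} (x : V3) (hf : DifferentiableAt ℝ f x)
    (hg : DifferentiableAt ℝ g x) :
    pd k (fun y => f y + g y) x = pd k f x + pd k g x := by
  unfold pd; rw [fderiv_fun_add hf hg]; rfl

section main
variable (q : V3 → ℝ) (xK c : V3) (B : Fin 3 → V3) (x : V3)

lemma diff_grad (hq : ContDiff ℝ (⊤ : ℕ∞) q) (m : Fin 3) :
    DifferentiableAt ℝ (fun y => grad q y m) x := by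
  have hf' : ContDiff ℝ (⊤ : ℕ∞) (fderiv ℝ q) := hq.fderiv_right (by simp)
  have hdf : DifferentiableAt ℝ (fderiv ℝ q) x := (hf'.differentiable (by simp)) x
  exact hdf.clm_apply (differentiableAt_const _)

lemma diff_cross (a b a' b' : Fin 3) :
    DifferentiableAt ℝ (fun y : V3 => (y a - xK a) * (c b + ∑ j, B b j * y j)
      - (y a' - xK a') * (c b' + ∑ j, B b' j * y j)) x :=
  (((hasFDerivAt_coord a (xK a) x).differentiableAt.mul
      (hasFDerivAt_aff (c b) (B b) x).differentiableAt).sub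
    ((hasFDerivAt_coord a' (xK a') x).differentiableAt.mul
      (hasFDerivAt_aff (c b') (B b') x).differentiableAt))

lemma pd_comp (hq : ContDiff ℝ (⊤ : ℕ∞) q) (k m a b a' b' : Fin 3) :
    pd k (fun y => grad q y m + ((y a - xK a) * (c b + ∑ j, B b j * y j)
        - (y a' - xK a') * (c b' + ∑ j, B b' j * y j))) x
      = pd k (fun y => grad q y m) x
        + (((if a = k then 1 else 0) * (c b + ∑ j, B b j * x j) + (x a - xK a) * B b k)
          - ((if a' = k then 1 else 0) * (c b' + ∑ j, B b' j * x j) + (x a' - xK a') * B b' k)) := by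
  rw [pd_add k x (diff_grad q x hq m) (diff_cross xK c B x a b a' b'),
    pd_sub k x ((hasFDerivAt_coord a (xK a) x).differentiableAt.fun_mul
      (hasFDerivAt_aff (c b) (B b) x).differentiableAt)
      ((hasFDerivAt_coord a' (xK a') x).differentiableAt.fun_mul
      (hasFDerivAt_aff (c b') (B b') x).differentiableAt),
    pd_cross_term, pd_cross_term]

lemma curl_formula (hq : ContDiff ℝ (⊤ : ℕ∞) q) (v : V3 → V3)
    (hv : ∀ y, v y = grad q y + cross3 (y - xK) (fun i => c i + ∑ j, B i j * y j))
    (i : Fin 3) :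
    curl v x i
      = -3 * ((c i + ∑ j, B i j * xK j) + (∑ j, B i j * (x j - xK j))
          - (B 0 0 + B 1 1 + B 2 2)/3 * (x i - xK i))
        + (c i + ∑ j, B i j * xK j) := by
  have e0 : (fun y => v y 0) = (fun y => grad q y 0 + ((y 1 - xK 1) * (c 2 + ∑ j, B 2 j * y j)
      - (y 2 - xK 2) * (c 1 + ∑ j, B 1 j * y j))) := by
    funext y; rw [hv y]; rfl
  have e1 : (fun y => v y 1) = (fun y => grad q y 1 + ((y 2 - xK 2) * (c 0 + ∑ j, B 0 j * y j)
      - (y 0 - xK 0) * (c 2 + ∑ j, B 2 j * y j))) := by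
    funext y; rw [hv y]; rfl
  have e2 : (fun y => v y 2) = (fun y => grad q y 2 + ((y 0 - xK 0) * (c 1 + ∑ j, B 1 j * y j)
      - (y 1 - xK 1) * (c 0 + ∑ j, B 0 j * y j))) := by
    funext y; rw [hv y]; rfl
  have hmk2 : (⟨2, by norm_num⟩ : Fin 3) = 2 := rfl
  fin_cases i <;> simp only [hmk2]
  · show pd 1 (fun y => v y 2) x - pd 2 (fun y => v y 1) x = _
    rw [e2, e1, pd_comp q xK c B x hq, pd_comp q xK c B x hq,
      pd_grad_symm hq 1 2 x]
    simp only [Fin.sum_univ_three, Fin.ext_iff]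
    norm_num
    ring
  · show pd 2 (fun y => v y 0) x - pd 0 (fun y => v y 2) x = _
    rw [e0, e2, pd_comp q xK c B x hq, pd_comp q xK c B x hq,
      pd_grad_symm hq 2 0 x]
    simp only [Fin.sum_univ_three, Fin.ext_iff]
    norm_num
    ring
  · show pd 0 (fun y => v y 1) x - pd 1 (fun y => v y 0) x = _
    rw [e1, e0, pd_comp q xK c B x hq, pd_comp q xK c B x hq,
      pd_grad_symm hq 0 1 x]
    simp only [Fin.sum_univ_three, Fin.ext_iff]
    norm_num
    ring
end main

def Δ3 : Set V3 := {t | (∀ i, 0 ≤ t i) ∧ t 0 + t 1 + t 2 ≤ 1}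

lemma isClosed_Δ3 : IsClosed Δ3 := by
  have h1 : IsClosed {t : V3 | ∀ i, 0 ≤ t i} := by
    have : {t : V3 | ∀ i, 0 ≤ t i} = ⋂ i, {t : V3 | 0 ≤ t i} := by
      ext t; simp [Set.mem_iInter]
    rw [this]
    exact isClosed_iInter fun i => isClosed_le continuous_const (continuous_apply i)
  have h2 : IsClosed {t : V3 | t 0 + t 1 + t 2 ≤ 1} :=
    isClosed_le (by continuity) continuous_const
  exact h1.inter h2

lemma isCompact_Δ3 : IsCompact Δ3 := by
  apply Metric.isCompact_of_isClosed_isBounded isClosed_Δ3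
  rw [Metric.isBounded_iff_subset_closedBall 0]
  refine ⟨1, fun t ht => ?_⟩
  obtain ⟨h0, hs⟩ := ht
  simp only [Metric.mem_closedBall, dist_zero_right]
  rw [pi_norm_le_iff_of_nonneg (by norm_num)]
  intro i
  have hi := h0 i
  have h1 : t i ≤ 1 := by
    have h2 : t i ≤ ∑ j, t j := Finset.single_le_sum (fun j _ => h0 j) (Finset.mem_univ i)
    rw [Fin.sum_univ_three] at h2
    linarith
  rw [Real.norm_eq_abs, abs_le]
  constructor <;> linarith

lemma measurableSet_Δ3 : MeasurableSet Δ3 := isClosed_Δ3.measurableSet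

lemma convex_Δ3 : Convex ℝ Δ3 := by
  intro s hs t ht a b ha hb hab
  refine ⟨fun i => by have := hs.1 i; have := ht.1 i; simp [Pi.add_apply]; positivity, ?_⟩
  have h1 := hs.2
  have h2 := ht.2
  simp only [Pi.add_apply, Pi.smul_apply, smul_eq_mul]
  nlinarith [hs.2, ht.2]

def matCLM (A : Matrix (Fin 3) (Fin 3) ℝ) : V3 →L[ℝ] V3 :=
  LinearMap.toContinuousLinearMap (Matrix.toLin' A)

lemma matCLM_det (A : Matrix (Fin 3) (Fin 3) ℝ) : (matCLM A).det = A.det := by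
  rw [ContinuousLinearMap.det]
  exact (LinearMap.det_toLin' A)

lemma hasFDerivAt_affmap (A : Matrix (Fin 3) (Fin 3) ℝ) (b t : V3) :
    HasFDerivAt (fun s => A.mulVec s + b) (matCLM A) t := by
  have h := ((matCLM A).hasFDerivAt (x := t)).add_const b
  have : (fun s => matCLM A s + b) = fun s => A.mulVec s + b := by
    funext s; simp [matCLM, Matrix.toLin'_apply]
  rwa [this] at h

/-- Change of variables for affine maps of V3. -/
lemma cov_aff (A : Matrix (Fin 3) (Fin 3) ℝ) (b : V3) (s : Set V3) (hs : MeasurableSet s)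
    (hinj : Set.InjOn (fun t => A.mulVec t + b) s) (g : V3 → ℝ) :
    ∫ y in (fun t => A.mulVec t + b) '' s, g y
      = |A.det| * ∫ t in s, g (A.mulVec t + b) := by
  rw [integral_image_eq_integral_abs_det_fderiv_smul volume hs
    (fun t _ => (hasFDerivAt_affmap A b t).hasFDerivWithinAt) hinj g]
  simp only [matCLM_det, smul_eq_mul]
  rw [integral_const_mul]

lemma integrableOn_Δ3 {g : V3 → ℝ} (hg : Continuous g) : IntegrableOn g Δ3 volume :=
  hg.continuousOn.integrableOn_compact isCompact_Δ3

def A0 : Matrix (Fin 3) (Fin 3) ℝ := !![-1,-1,-1; 0,1,0; 0,0,1]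
def Aτ1 : Matrix (Fin 3) (Fin 3) ℝ := !![0,1,0; 1,0,0; 0,0,1]
def Aτ2 : Matrix (Fin 3) (Fin 3) ℝ := !![0,0,1; 0,1,0; 1,0,0]

lemma sigma0_apply (t : V3) :
    A0.mulVec t + ![1,0,0] = ![1 - (t 0 + t 1 + t 2), t 1, t 2] := by
  funext j
  fin_cases j <;>
    simp [A0, Matrix.mulVec, dotProduct, Fin.sum_univ_three] <;> ring

lemma tau1_apply (t : V3) : Aτ1.mulVec t + 0 = ![t 1, t 0, t 2] := by
  funext j
  fin_cases j <;>
    simp [Aτ1, Matrix.mulVec, dotProduct, Fin.sum_univ_three, Matrix.vecHead, Matrix.vecTail]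

lemma tau2_apply (t : V3) : Aτ2.mulVec t + 0 = ![t 2, t 1, t 0] := by
  funext j
  fin_cases j <;>
    simp [Aτ2, Matrix.mulVec, dotProduct, Fin.sum_univ_three, Matrix.vecHead, Matrix.vecTail]

lemma mem_Δ3 (t : V3) : t ∈ Δ3 ↔ (∀ i, 0 ≤ t i) ∧ t 0 + t 1 + t 2 ≤ 1 := Iff.rfl

lemma vec_mem_Δ3 {a b c : ℝ} (ha : 0 ≤ a) (hb : 0 ≤ b) (hc : 0 ≤ c) (habc : a + b + c ≤ 1) :
    (![a,b,c] : V3) ∈ Δ3 := by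
  constructor
  · intro i; fin_cases i <;> simpa
  · simpa using habc

lemma sigma0_image : (fun t : V3 => A0.mulVec t + ![1,0,0]) '' Δ3 = Δ3 := by
  have hinv : ∀ t : V3, (fun t : V3 => A0.mulVec t + ![1,0,0])
      ((fun t : V3 => A0.mulVec t + ![1,0,0]) t) = t := by
    intro t
    simp only [sigma0_apply]
    funext j; fin_cases j <;> simp <;> ring
  have hmaps : ∀ t ∈ Δ3, (fun t : V3 => A0.mulVec t + ![1,0,0]) t ∈ Δ3 := by
    intro t ht
    simp only [sigma0_apply]
    obtain ⟨h0, hs⟩ := ht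
    exact vec_mem_Δ3 (by linarith) (h0 1) (h0 2) (by have := h0 0; simp; linarith)
  apply Set.Subset.antisymm
  · rintro y ⟨t, ht, rfl⟩; exact hmaps t ht
  · intro t ht
    exact ⟨_, hmaps t ht, hinv t⟩

lemma tau1_image : (fun t : V3 => Aτ1.mulVec t + 0) '' Δ3 = Δ3 := by
  have hmaps : ∀ t ∈ Δ3, (fun t : V3 => Aτ1.mulVec t + 0) t ∈ Δ3 := by
    intro t ht
    simp only [tau1_apply]
    obtain ⟨h0, hs⟩ := ht
    exact vec_mem_Δ3 (h0 1) (h0 0) (h0 2) (by linarith)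
  have hinv : ∀ t : V3, (fun t : V3 => Aτ1.mulVec t + 0)
      ((fun t : V3 => Aτ1.mulVec t + 0) t) = t := by
    intro t
    simp only [tau1_apply]
    funext j; fin_cases j <;> simp
  apply Set.Subset.antisymm
  · rintro y ⟨t, ht, rfl⟩; exact hmaps t ht
  · intro t ht
    exact ⟨_, hmaps t ht, hinv t⟩

lemma tau2_image : (fun t : V3 => Aτ2.mulVec t + 0) '' Δ3 = Δ3 := by
  have hmaps : ∀ t ∈ Δ3, (fun t : V3 => Aτ2.mulVec t + 0) t ∈ Δ3 := by
    intro t ht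
    simp only [tau2_apply]
    obtain ⟨h0, hs⟩ := ht
    exact vec_mem_Δ3 (h0 2) (h0 1) (h0 0) (by linarith)
  have hinv : ∀ t : V3, (fun t : V3 => Aτ2.mulVec t + 0)
      ((fun t : V3 => Aτ2.mulVec t + 0) t) = t := by
    intro t
    simp only [tau2_apply]
    funext j; fin_cases j <;> simp
  apply Set.Subset.antisymm
  · rintro y ⟨t, ht, rfl⟩; exact hmaps t ht
  · intro t ht
    exact ⟨_, hmaps t ht, hinv t⟩

lemma involutive_injOn {f : V3 → V3} (hinv : ∀ t, f (f t) = t) (s : Set V3) :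
    Set.InjOn f s := fun a _ b _ hab => by
  have := congrArg f hab
  rwa [hinv a, hinv b] at this

lemma I0_eq_I1 : (∫ t in Δ3, t 0) = ∫ t in Δ3, t 1 := by
  have h := cov_aff Aτ1 0 Δ3 measurableSet_Δ3
    (involutive_injOn (fun t => by simp only [tau1_apply]; funext j; fin_cases j <;> simp) Δ3)
    (fun y => y 0)
  rw [tau1_image] at h
  have hdet : |Aτ1.det| = 1 := by
    simp [Aτ1, Matrix.det_fin_three]
  rw [hdet, one_mul] at h
  rw [h]
  apply setIntegral_congr_fun measurableSet_Δ3
  intro t _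
  simp only [tau1_apply]
  simp

lemma I0_eq_I2 : (∫ t in Δ3, t 0) = ∫ t in Δ3, t 2 := by
  have h := cov_aff Aτ2 0 Δ3 measurableSet_Δ3
    (involutive_injOn (fun t => by simp only [tau2_apply]; funext j; fin_cases j <;> simp) Δ3)
    (fun y => y 0)
  rw [tau2_image] at h
  have hdet : |Aτ2.det| = 1 := by
    simp [Aτ2, Matrix.det_fin_three]
  rw [hdet, one_mul] at h
  rw [h]
  apply setIntegral_congr_fun measurableSet_Δ3
  intro t _
  simp only [tau2_apply]
  simp

lemma I0_eq_rest : (∫ t in Δ3, t 0) = ∫ t in Δ3, (1 - (t 0 + t 1 + t 2)) := by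
  have hinv : ∀ t : V3, (fun t : V3 => A0.mulVec t + ![1,0,0])
      ((fun t : V3 => A0.mulVec t + ![1,0,0]) t) = t := by
    intro t
    simp only [sigma0_apply]
    funext j; fin_cases j <;> simp <;> ring
  have h := cov_aff A0 ![1,0,0] Δ3 measurableSet_Δ3 (involutive_injOn hinv Δ3) (fun y => y 0)
  rw [sigma0_image] at h
  have hdet : |A0.det| = 1 := by
    simp [A0, Matrix.det_fin_three]
  rw [hdet, one_mul] at h
  rw [h]
  apply setIntegral_congr_fun measurableSet_Δ3
  intro t _
  simp only [sigma0_apply]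
  simp

lemma simplex_int_affine_zero (α : ℝ) (β : V3) (h4 : 4*α + (β 0 + β 1 + β 2) = 0) :
    (∫ t in Δ3, (α + ∑ j, β j * t j)) = 0 := by
  have hci : ∀ j : Fin 3, IntegrableOn (fun t : V3 => β j * t j) Δ3 volume :=
    fun j => integrableOn_Δ3 (continuous_const.mul (continuous_apply j))
  have hconst : IntegrableOn (fun _ : V3 => α) Δ3 volume := integrableOn_Δ3 continuous_const
  have hsum : IntegrableOn (fun t : V3 => ∑ j, β j * t j) Δ3 volume := by
    have : (fun t : V3 => ∑ j, β j * t j)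
        = fun t => β 0 * t 0 + β 1 * t 1 + β 2 * t 2 := by
      funext t; rw [Fin.sum_univ_three]
    rw [this]
    exact ((hci 0).add (hci 1)).add (hci 2)
  have h01 : IntegrableOn (fun t : V3 => β 0 * t 0 + β 1 * t 1) Δ3 volume :=
    (hci 0).add (hci 1)
  have h012 : IntegrableOn (fun t : V3 => β 0 * t 0 + β 1 * t 1 + β 2 * t 2) Δ3 volume :=
    h01.add (hci 2)
  have c0 : IntegrableOn (fun t : V3 => t 0) Δ3 volume := integrableOn_Δ3 (continuous_apply 0)
  have c1 : IntegrableOn (fun t : V3 => t 1) Δ3 volume := integrableOn_Δ3 (continuous_apply 1)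
  have c2 : IntegrableOn (fun t : V3 => t 2) Δ3 volume := integrableOn_Δ3 (continuous_apply 2)
  have c01 : IntegrableOn (fun t : V3 => t 0 + t 1) Δ3 volume := c0.add c1
  have c012 : IntegrableOn (fun t : V3 => t 0 + t 1 + t 2) Δ3 volume := c01.add c2
  have hone : IntegrableOn (fun _ : V3 => (1:ℝ)) Δ3 volume := integrableOn_Δ3 continuous_const
  have hsum' : (fun t : V3 => ∑ j, β j * t j)
      = fun t => β 0 * t 0 + β 1 * t 1 + β 2 * t 2 := by
    funext t; rw [Fin.sum_univ_three]
  rw [hsum'] at hsum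
  have hI : (∫ t in Δ3, (α + (β 0 * t 0 + β 1 * t 1 + β 2 * t 2)))
      = (volume Δ3).toReal * α + (β 0 * (∫ t in Δ3, t 0) + β 1 * (∫ t in Δ3, t 1)
        + β 2 * (∫ t in Δ3, t 2)) := by
    rw [integral_add hconst hsum, integral_add h01 (hci 2), integral_add (hci 0) (hci 1),
      integral_const_mul, integral_const_mul, integral_const_mul, setIntegral_const]
    simp only [smul_eq_mul, measureReal_def]
    try ring
  have hIV : (volume Δ3).toReal = 4 * ∫ t in Δ3, t 0 := by
    have h := I0_eq_rest
    rw [integral_sub hone c012, integral_add c01 c2, integral_add c0 c1,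
      ← I0_eq_I1, ← I0_eq_I2] at h
    have hV : (∫ _ in Δ3, (1:ℝ)) = (volume Δ3).toReal := by
      rw [setIntegral_const]; simp [measureReal_def]
    rw [hV] at h
    linarith
  have hgoal : (fun t : V3 => α + ∑ j, β j * t j)
      = fun t => α + (β 0 * t 0 + β 1 * t 1 + β 2 * t 2) := by
    funext t; rw [Fin.sum_univ_three]
  rw [hgoal, hI, ← I0_eq_I1, ← I0_eq_I2, hIV]
  linear_combination (∫ t in Δ3, t 0) * h4

section K
variable (x : Fin 4 → V3)

def AK : Matrix (Fin 3) (Fin 3) ℝ := Matrix.of fun j i => x i.succ j - x 0 j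

lemma succ0 : (0 : Fin 3).succ = 1 := rfl
lemma succ1 : (1 : Fin 3).succ = 2 := rfl
lemma succ2 : (2 : Fin 3).succ = 3 := rfl

lemma AK_mulVec (t : V3) : (AK x).mulVec t = ∑ i, t i • (x i.succ - x 0) := by
  funext j
  simp [AK, Matrix.mulVec, dotProduct, Fin.sum_univ_three, Finset.sum_apply]
  ring

lemma phiK_injective (hx : AffineIndependent ℝ x) :
    Function.Injective (fun t : V3 => (AK x).mulVec t + x 0) := by
  have h1 := (affineIndependent_iff_linearIndependent_vsub ℝ x 0).1 hx
  have einj : Function.Injective (fun i : Fin 3 => (⟨i.succ, Fin.succ_ne_zero i⟩ :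
      {i : Fin 4 // i ≠ 0})) := by
    intro a b hab
    have : (a.succ : Fin 4) = b.succ := congrArg Subtype.val hab
    exact Fin.succ_injective 3 this
  have hli : LinearIndependent ℝ (fun i : Fin 3 => x i.succ - x 0) := by
    have := h1.comp _ einj
    exact this
  intro s t hst
  simp only [add_left_inj] at hst
  have hz : ∑ i : Fin 3, (s i - t i) • (x i.succ - x 0) = 0 := by
    have : ∑ i : Fin 3, (s i - t i) • (x i.succ - x 0)
        = (∑ i : Fin 3, s i • (x i.succ - x 0)) - ∑ i : Fin 3, t i • (x i.succ - x 0) := by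
      rw [← Finset.sum_sub_distrib]
      congr 1; funext i; rw [sub_smul]
    rw [this, ← AK_mulVec, ← AK_mulVec, hst, sub_self]
  have hall := Fintype.linearIndependent_iff.1 hli (fun i => s i - t i) hz
  funext i
  have h5 : s i - t i = 0 := hall i
  linarith

lemma phiK_image :
    (fun t : V3 => (AK x).mulVec t + x 0) '' Δ3 = convexHull ℝ (Set.range x) := by
  apply Set.Subset.antisymm
  · rintro y ⟨t, ht, rfl⟩
    obtain ⟨h0, hs⟩ := ht
    set w : Fin 4 → ℝ := ![1 - (t 0 + t 1 + t 2), t 0, t 1, t 2] with hw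
    have hw0 : ∀ i ∈ Finset.univ, 0 ≤ w i := by
      intro i _
      fin_cases i <;> simp [hw] <;> linarith [h0 0, h0 1, h0 2]
    have hw1 : ∑ i, w i = 1 := by
      simp [hw, Fin.sum_univ_four]
      ring
    have hmem := Finset.centerMass_mem_convexHull Finset.univ hw0 (by rw [hw1]; norm_num)
      (fun i _ => Set.mem_range_self (f := x) i)
    have heq : Finset.univ.centerMass w x = (AK x).mulVec t + x 0 := by
      rw [Finset.centerMass_eq_of_sum_1 _ _ hw1]
      funext j
      rw [AK_mulVec]
      simp [Fin.sum_univ_four, Fin.sum_univ_three, hw, Finset.sum_apply]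
      ring_nf
    rwa [heq] at hmem
  · apply convexHull_min
    · rintro y ⟨i, rfl⟩
      fin_cases i
      · exact ⟨0, ⟨fun i => le_refl 0, by norm_num⟩, by
          funext j; simp [Matrix.mulVec_zero]⟩
      · refine ⟨![1,0,0], vec_mem_Δ3 (by norm_num) (le_refl 0) (le_refl 0) (by norm_num), ?_⟩
        show (AK x).mulVec ![1,0,0] + x 0 = _
        rw [AK_mulVec]
        funext j
        simp [Fin.sum_univ_three, Finset.sum_apply, succ0]
      · refine ⟨![0,1,0], vec_mem_Δ3 (le_refl 0) (by norm_num) (le_refl 0) (by norm_num), ?_⟩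
        show (AK x).mulVec ![0,1,0] + x 0 = _
        rw [AK_mulVec]
        funext j
        simp [Fin.sum_univ_three, Finset.sum_apply, succ1]
      · refine ⟨![0,0,1], vec_mem_Δ3 (le_refl 0) (le_refl 0) (by norm_num) (by norm_num), ?_⟩
        show (AK x).mulVec ![0,0,1] + x 0 = _
        rw [AK_mulVec]
        funext j
        simp [Fin.sum_univ_three, Finset.sum_apply, succ2]
    · have himg2 : (fun t : V3 => (AK x).mulVec t + x 0) '' Δ3
          = (fun v => x 0 + v) '' ((Matrix.toLin' (AK x)) '' Δ3) := by
        rw [Set.image_image]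
        rw [show (fun t : V3 => (AK x).mulVec t + x 0)
            = (fun t : V3 => x 0 + (Matrix.toLin' (AK x)) t) from
          funext fun t => by rw [Matrix.toLin'_apply, add_comm]]
      rw [himg2]
      exact (convex_Δ3.linear_image (Matrix.toLin' (AK x))).translate (x 0)

lemma centroid_zero (hx : AffineIndependent ℝ x) (xK : V3)
    (hxK : xK = (4 : ℝ)⁻¹ • (x 0 + x 1 + x 2 + x 3)) (j : Fin 3) :
    ∫ y in convexHull ℝ (Set.range x), (y j - xK j) = 0 := by
  rw [← phiK_image x]
  rw [cov_aff (AK x) (x 0) Δ3 measurableSet_Δ3 ((phiK_injective x hx).injOn) _]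
  have hβ : ∀ t : V3, ((AK x).mulVec t + x 0) j - xK j
      = (x 0 j - xK j) + ∑ i, (![x 1 j - x 0 j, x 2 j - x 0 j, x 3 j - x 0 j] : V3) i * t i := by
    intro t
    rw [AK_mulVec]
    simp [Fin.sum_univ_three, Finset.sum_apply, succ0, succ1, succ2]
    ring
  rw [setIntegral_congr_fun measurableSet_Δ3 (fun t _ => hβ t)]
  rw [simplex_int_affine_zero _ _ (by
    simp [hxK]
    ring)]
  ring

lemma dot3_nonneg (z : V3) : 0 ≤ dot3 z z := Finset.sum_nonneg fun i _ => mul_self_nonneg _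

lemma sq_norm_le_dot3 (z : V3) : ‖z‖^2 ≤ dot3 z z := by
  have h : ‖z‖ ≤ Real.sqrt (dot3 z z) := by
    rw [pi_norm_le_iff_of_nonneg (Real.sqrt_nonneg _)]
    intro i
    rw [Real.norm_eq_abs]
    apply Real.abs_le_sqrt
    have : z i * z i ≤ dot3 z z := by
      unfold dot3
      exact Finset.single_le_sum (fun j _ => mul_self_nonneg (z j)) (Finset.mem_univ i)
    nlinarith
  calc ‖z‖^2 ≤ (Real.sqrt (dot3 z z))^2 := by
        apply pow_le_pow_left₀ (norm_nonneg z) h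
    _ = dot3 z z := Real.sq_sqrt (dot3_nonneg z)

lemma dot3_le_3_sq_norm (z : V3) : dot3 z z ≤ 3 * ‖z‖^2 := by
  have hi : ∀ i, z i * z i ≤ ‖z‖^2 := by
    intro i
    have h := norm_le_pi_norm z i
    rw [Real.norm_eq_abs] at h
    nlinarith [abs_nonneg (z i), le_abs_self (z i), neg_abs_le (z i)]
  unfold dot3
  rw [Fin.sum_univ_three]
  linarith [hi 0, hi 1, hi 2]

lemma dot3_cross_le (a b : V3) :
    dot3 (cross3 a b) (cross3 a b) ≤ dot3 a a * dot3 b b := by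
  have h0 : cross3 a b 0 = a 1 * b 2 - a 2 * b 1 := rfl
  have h1 : cross3 a b 1 = a 2 * b 0 - a 0 * b 2 := rfl
  have h2 : cross3 a b 2 = a 0 * b 1 - a 1 * b 0 := rfl
  unfold dot3
  rw [Fin.sum_univ_three, Fin.sum_univ_three, Fin.sum_univ_three, h0, h1, h2]
  nlinarith [sq_nonneg (a 0 * b 0 + a 1 * b 1 + a 2 * b 2)]

/-- inf_{q ∈ P_{k+1}(K)} ‖v − ∇q‖_{L²(K)} ≤ C h_K ‖curl v‖_{L²(K)}
for v ∈ W_k(K), with C depending only on the shape regularity. -/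
theorem stmt15 (k : ℕ) (hk : k = 0 ∨ k = 1) (γ : ℝ) (hγ : 0 < γ) :
    ∃ C : ℝ, 0 < C ∧ ∀ x : Fin 4 → V3, AffineIndependent ℝ x →
      ∀ K : Set V3, K = convexHull ℝ (Set.range x) →
      ∀ hK : ℝ, hK = Metric.diam K →
      hK ^ 3 ≤ γ * (volume K).toReal →
      ∀ xK : V3, xK = (4 : ℝ)⁻¹ • (x 0 + x 1 + x 2 + x 3) →
      ∀ v : V3 → V3, Wmem k xK v →
      ∃ q : V3 → ℝ, IsPolyDeg (k + 1) q ∧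
        (∫ y in K, ‖v y - grad q y‖ ^ 2) ≤ C ^ 2 * hK ^ 2 * ∫ y in K, ‖curl v y‖ ^ 2 := by
  refine ⟨2, by norm_num, ?_⟩
  intro x hx K hKdef hK hKeq hshape xK hxK v hv
  obtain ⟨q, r, hq, hr, hvqr⟩ := hv
  refine ⟨q, hq, ?_⟩
  have hqc : ContDiff ℝ (⊤ : ℕ∞) q := hq.contDiff
  choose a b hab using fun i => isPolyDeg_one_repr (hr i)
  set tr : ℝ := b 0 0 + b 1 1 + b 2 2 with htr
  set d : V3 := fun i => a i + ∑ j, b i j * xK j with hd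
  set U : V3 → V3 := fun y i => (∑ j, b i j * (y j - xK j)) - tr/3 * (y i - xK i) with hU
  set g : V3 → V3 := fun y i => d i + U y i with hg
  set w' : V3 → V3 := fun y => cross3 (fun j => y j - xK j) (g y) with hw'
  set z' : V3 → V3 := fun y i => -3 * U y i - 2 * d i with hz'
  -- rewrite v
  have hvq' : ∀ y, v y = grad q y + cross3 (y - xK) (fun i => a i + ∑ j, b i j * y j) := by
    intro y
    rw [hvqr y]
    have hry : r y = fun i => a i + ∑ j, b i j * y j := funext fun i => hab i y
    rw [hry]
  -- curl formula
  have hcurl : ∀ y, curl v y = z' y := by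
    intro y
    funext i
    have h := curl_formula q xK a b y hqc v hvq' i
    rw [h]
    simp only [hz', hg, hU, hd, htr]
    ring
  -- v - grad q
  have hW : ∀ y, v y - grad q y = w' y := by
    intro y
    have h1 : v y - grad q y = cross3 (y - xK) (fun i => a i + ∑ j, b i j * y j) := by
      rw [hvq' y]
      funext i
      simp
    rw [h1]
    funext i
    have hsub : (y - xK) = (fun j => y j - xK j) := rfl
    rw [hsub]
    fin_cases i
    · show ((y 1 - xK 1) * (a 2 + ∑ j, b 2 j * y j) - (y 2 - xK 2) * (a 1 + ∑ j, b 1 j * y j)) = ((y 1 - xK 1) * g y 2 - (y 2 - xK 2) * g y 1)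
      simp only [hg, hU, hd]
      rw [Fin.sum_univ_three, Fin.sum_univ_three, Fin.sum_univ_three, Fin.sum_univ_three,
        Fin.sum_univ_three, Fin.sum_univ_three]
      ring
    · show ((y 2 - xK 2) * (a 0 + ∑ j, b 0 j * y j) - (y 0 - xK 0) * (a 2 + ∑ j, b 2 j * y j)) = ((y 2 - xK 2) * g y 0 - (y 0 - xK 0) * g y 2)
      simp only [hg, hU, hd]
      rw [Fin.sum_univ_three, Fin.sum_univ_three, Fin.sum_univ_three, Fin.sum_univ_three,
        Fin.sum_univ_three, Fin.sum_univ_three]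
      ring
    · show ((y 0 - xK 0) * (a 1 + ∑ j, b 1 j * y j) - (y 1 - xK 1) * (a 0 + ∑ j, b 0 j * y j)) = ((y 0 - xK 0) * g y 1 - (y 1 - xK 1) * g y 0)
      simp only [hg, hU, hd]
      rw [Fin.sum_univ_three, Fin.sum_univ_three, Fin.sum_univ_three, Fin.sum_univ_three,
        Fin.sum_univ_three, Fin.sum_univ_three]
      ring
  -- geometry of K
  have hKcomp : IsCompact K := hKdef ▸ (Set.finite_range x).isCompact_convexHull ℝ
  have hKmeas : MeasurableSet K := hKcomp.isClosed.measurableSet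
  have hKbdd : Bornology.IsBounded K := hKcomp.isBounded
  have hK0 : 0 ≤ hK := hKeq ▸ Metric.diam_nonneg
  have hxKmem : xK ∈ K := by
    have hsum1 : ∑ _i : Fin 4, ((1:ℝ)/4) = 1 := by norm_num
    have heq : Finset.univ.centerMass (fun _ : Fin 4 => (1:ℝ)/4) x
        = (4:ℝ)⁻¹ • (x 0 + x 1 + x 2 + x 3) := by
      rw [Finset.centerMass_eq_of_sum_1 _ _ hsum1]
      funext j
      simp [Fin.sum_univ_four]
      ring
    rw [hKdef, hxK, ← heq]
    exact Finset.centerMass_mem_convexHull _ (fun i _ => by norm_num)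
      (by rw [hsum1]; norm_num) (fun i _ => Set.mem_range_self i)
  have hdist : ∀ y ∈ K, ‖(fun j => y j - xK j : V3)‖ ≤ hK := by
    intro y hy
    have h1 : dist y xK ≤ Metric.diam K := Metric.dist_le_diam_of_mem hKbdd hy hxKmem
    have h2 : dist y xK = ‖(fun j => y j - xK j : V3)‖ := by
      rw [dist_eq_norm]
      rfl
    rw [← h2, hKeq]
    exact h1
  -- centroid
  have hcent : ∀ j : Fin 3, (∫ y in K, (y j - xK j)) = 0 := by
    intro j
    rw [hKdef]
    exact centroid_zero x hx xK hxK j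
  -- continuity
  have hUc : ∀ i, Continuous (fun y => U y i) := by
    intro i
    simp only [hU]
    exact (continuous_finset_sum _ fun j _ =>
        continuous_const.mul ((continuous_apply j).sub continuous_const)).sub
      (continuous_const.mul ((continuous_apply i).sub continuous_const))
  have hgc : ∀ i, Continuous (fun y => g y i) := by
    intro i
    simp only [hg]
    exact continuous_const.add (hUc i)
  have hzc : ∀ i, Continuous (fun y => z' y i) := by
    intro i
    simp only [hz']
    exact (continuous_const.mul (hUc i)).sub continuous_const
  have hz'cont : Continuous z' := continuous_pi hzc
  have hmc : ∀ j : Fin 3, Continuous (fun y : V3 => y j - xK j) :=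
    fun j => (continuous_apply j).sub continuous_const
  have hw'cont : Continuous w' := by
    apply continuous_pi
    intro i
    fin_cases i
    · show Continuous (fun y => (y 1 - xK 1) * g y 2 - (y 2 - xK 2) * g y 1)
      exact ((hmc 1).mul (hgc 2)).sub ((hmc 2).mul (hgc 1))
    · show Continuous (fun y => (y 2 - xK 2) * g y 0 - (y 0 - xK 0) * g y 2)
      exact ((hmc 2).mul (hgc 0)).sub ((hmc 0).mul (hgc 2))
    · show Continuous (fun y => (y 0 - xK 0) * g y 1 - (y 1 - xK 1) * g y 0)
      exact ((hmc 0).mul (hgc 1)).sub ((hmc 1).mul (hgc 0))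
  have hggcont : Continuous (fun y => dot3 (g y) (g y)) := by
    show Continuous (fun y => ∑ i, g y i * g y i)
    exact continuous_finset_sum _ fun i _ => (hgc i).mul (hgc i)
  have hUUcont : Continuous (fun y => dot3 (U y) (U y)) := by
    show Continuous (fun y => ∑ i, U y i * U y i)
    exact continuous_finset_sum _ fun i _ => (hUc i).mul (hUc i)
  have hUdcont : Continuous (fun y => dot3 (U y) d) := by
    show Continuous (fun y => ∑ i, U y i * d i)
    exact continuous_finset_sum _ fun i _ => (hUc i).mul continuous_const
  have hzzcont : Continuous (fun y => dot3 (z' y) (z' y)) := by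
    show Continuous (fun y => ∑ i, z' y i * z' y i)
    exact continuous_finset_sum _ fun i _ => (hzc i).mul (hzc i)
  have intK : ∀ {f : V3 → ℝ}, Continuous f → IntegrableOn f K volume :=
    fun h => h.continuousOn.integrableOn_compact hKcomp
  -- rewrite the integrals
  have LHSint : (∫ y in K, ‖v y - grad q y‖^2) = ∫ y in K, ‖w' y‖^2 :=
    setIntegral_congr_fun hKmeas (fun y _ => by rw [hW y])
  have RHSint : (∫ y in K, ‖curl v y‖^2) = ∫ y in K, ‖z' y‖^2 :=
    setIntegral_congr_fun hKmeas (fun y _ => by rw [hcurl y])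
  rw [LHSint, RHSint]
  -- step 1
  have step1 : (∫ y in K, ‖w' y‖^2) ≤ ∫ y in K, 3*hK^2 * dot3 (g y) (g y) := by
    apply setIntegral_mono_on (intK (hw'cont.norm.pow 2)) (intK (continuous_const.mul hggcont)) hKmeas
    intro y hy
    show ‖w' y‖^2 ≤ 3*hK^2 * dot3 (g y) (g y)
    have h1 : ‖w' y‖^2 ≤ dot3 (w' y) (w' y) := sq_norm_le_dot3 _
    have h2 : dot3 (w' y) (w' y)
        ≤ dot3 (fun j => y j - xK j) (fun j => y j - xK j) * dot3 (g y) (g y) :=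
      dot3_cross_le _ _
    have h3 : dot3 (fun j => y j - xK j) (fun j => y j - xK j) ≤ 3 * hK^2 := by
      have h4 := dot3_le_3_sq_norm (fun j => y j - xK j)
      have h5 := hdist y hy
      nlinarith [norm_nonneg (fun j => y j - xK j : V3)]
    nlinarith [dot3_nonneg (g y), dot3_nonneg (fun j => y j - xK j : V3)]
  -- expansions
  set A : ℝ := ∫ y in K, dot3 (U y) (U y) with hA
  set Cc : ℝ := ∫ y in K, dot3 (U y) d with hCc
  set Bv : ℝ := (volume K).toReal * dot3 d d with hBv
  have hgg : (∫ y in K, dot3 (g y) (g y)) = A + 2*Cc + Bv := by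
    have hexp : ∀ y : V3, dot3 (g y) (g y)
        = (dot3 (U y) (U y) + 2 * dot3 (U y) d) + dot3 d d := by
      intro y
      simp only [dot3, hg, Fin.sum_univ_three]
      ring
    rw [setIntegral_congr_fun hKmeas (fun y _ => hexp y)]
    have i2 : IntegrableOn (fun y : V3 => 2 * dot3 (U y) d) K volume :=
      intK (continuous_const.mul hUdcont)
    have i12 : IntegrableOn (fun y : V3 => dot3 (U y) (U y) + 2 * dot3 (U y) d) K volume :=
      (intK hUUcont).add i2
    rw [integral_add i12 (intK continuous_const), integral_add (intK hUUcont) i2]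
    rw [integral_const_mul, setIntegral_const]
    simp only [smul_eq_mul, measureReal_def]
    try ring
  have hzz : (∫ y in K, dot3 (z' y) (z' y)) = 9*A + 12*Cc + 4*Bv := by
    have hexp : ∀ y : V3, dot3 (z' y) (z' y)
        = (9 * dot3 (U y) (U y) + 12 * dot3 (U y) d) + 4 * dot3 d d := by
      intro y
      simp only [dot3, hz', Fin.sum_univ_three]
      ring
    rw [setIntegral_congr_fun hKmeas (fun y _ => hexp y)]
    have i1 : IntegrableOn (fun y : V3 => 9 * dot3 (U y) (U y)) K volume :=
      intK (continuous_const.mul hUUcont)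
    have i2 : IntegrableOn (fun y : V3 => 12 * dot3 (U y) d) K volume :=
      intK (continuous_const.mul hUdcont)
    have i12 : IntegrableOn (fun y : V3 => 9 * dot3 (U y) (U y) + 12 * dot3 (U y) d) K volume :=
      i1.add i2
    rw [integral_add i12 (intK continuous_const), integral_add i1 i2]
    rw [integral_const_mul, integral_const_mul, setIntegral_const]
    simp only [smul_eq_mul, measureReal_def]
    try ring
  have hCc0 : Cc = 0 := by
    have hexp : ∀ y : V3, dot3 (U y) d
        = ((b 0 0*d 0 + b 1 0*d 1 + b 2 0*d 2 - tr/3*d 0) * (y 0 - xK 0)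
          + (b 0 1*d 0 + b 1 1*d 1 + b 2 1*d 2 - tr/3*d 1) * (y 1 - xK 1))
          + (b 0 2*d 0 + b 1 2*d 1 + b 2 2*d 2 - tr/3*d 2) * (y 2 - xK 2) := by
      intro y
      simp only [dot3, hU, Fin.sum_univ_three]
      ring
    rw [hCc, setIntegral_congr_fun hKmeas (fun y _ => hexp y)]
    have j0 : IntegrableOn (fun y : V3 =>
        (b 0 0*d 0 + b 1 0*d 1 + b 2 0*d 2 - tr/3*d 0) * (y 0 - xK 0)) K volume :=
      intK (continuous_const.mul (hmc 0))
    have j1 : IntegrableOn (fun y : V3 =>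
        (b 0 1*d 0 + b 1 1*d 1 + b 2 1*d 2 - tr/3*d 1) * (y 1 - xK 1)) K volume :=
      intK (continuous_const.mul (hmc 1))
    have j2 : IntegrableOn (fun y : V3 =>
        (b 0 2*d 0 + b 1 2*d 1 + b 2 2*d 2 - tr/3*d 2) * (y 2 - xK 2)) K volume :=
      intK (continuous_const.mul (hmc 2))
    have j01 : IntegrableOn (fun y : V3 =>
        (b 0 0*d 0 + b 1 0*d 1 + b 2 0*d 2 - tr/3*d 0) * (y 0 - xK 0)
        + (b 0 1*d 0 + b 1 1*d 1 + b 2 1*d 2 - tr/3*d 1) * (y 1 - xK 1)) K volume := j0.add j1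
    rw [integral_add j01 j2, integral_add j0 j1, integral_const_mul, integral_const_mul,
      integral_const_mul, hcent 0, hcent 1, hcent 2]
    ring
  have hA0 : 0 ≤ A := setIntegral_nonneg hKmeas (fun y _ => dot3_nonneg _)
  have hBv0 : 0 ≤ Bv := mul_nonneg ENNReal.toReal_nonneg (dot3_nonneg d)
  -- step 4
  have step4 : (∫ y in K, dot3 (z' y) (z' y)) ≤ 3 * ∫ y in K, ‖z' y‖^2 := by
    rw [← integral_const_mul]
    apply setIntegral_mono_on (intK hzzcont) (intK (continuous_const.mul (hz'cont.norm.pow 2))) hKmeas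
    intro y _
    exact dot3_le_3_sq_norm (z' y)
  have hIz0 : 0 ≤ ∫ y in K, ‖z' y‖^2 :=
    setIntegral_nonneg hKmeas (fun y _ => sq_nonneg _)
  -- assemble
  have step2 : (∫ y in K, 3*hK^2 * dot3 (g y) (g y)) = 3*hK^2 * (A + 2*Cc + Bv) := by
    rw [integral_const_mul, hgg]
  have hgg4 : A + 2*Cc + Bv ≤ (3/4) * ∫ y in K, ‖z' y‖^2 := by
    have h9 : 9*A + 12*Cc + 4*Bv ≤ 3 * ∫ y in K, ‖z' y‖^2 := by
      rw [← hzz]; exact step4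
    rw [hCc0] at h9 ⊢
    linarith
  have hfinal : (∫ y in K, ‖w' y‖^2) ≤ 3*hK^2 * ((3/4) * ∫ y in K, ‖z' y‖^2) := by
    calc (∫ y in K, ‖w' y‖^2) ≤ ∫ y in K, 3*hK^2 * dot3 (g y) (g y) := step1
      _ = 3*hK^2 * (A + 2*Cc + Bv) := step2
      _ ≤ 3*hK^2 * ((3/4) * ∫ y in K, ‖z' y‖^2) := by
          apply mul_le_mul_of_nonneg_left hgg4
          positivity
  calc (∫ y in K, ‖w' y‖^2) ≤ 3*hK^2 * ((3/4) * ∫ y in K, ‖z' y‖^2) := hfinal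
    _ ≤ (2:ℝ)^2 * hK^2 * ∫ y in K, ‖z' y‖^2 := by nlinarith [sq_nonneg hK, hIz0]
end K
end
end
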